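/- arXiv:math/0204063 — 5 statements merged into one kernel-verified Lean document; each statement's English description precedes it below -/
import Mathlib

section
/- Let γ : [0,L] → ℝⁿ (n ≥ 2) be a unit-speed C^{1,1} curve with γ' 1-Lipschitz (curvature at most 1). Then: (a) for all a, s ∈ [0,L] with |s − a| ≤ π, γ(s) ∈ O_{γ(a)}^c(γ'(a)), i.e. ‖γ(s) − γ(a) − w‖ ≥ 1 for every unit vector w with ⟨w, γ'(a)⟩ = 0; and (b) for a < s₀ in [0,L] with s₀ − a ≤ π, the point γ(s₀) lies on the boundary of O_{γ(a)}^c(γ'(a)) if and only if there is a unit vector w with ⟨w, γ'(a)⟩ = 0 such that γ(s) = γ(a) + sin(s−a)·γ'(a) + (1−cos(s−a))·w for all s ∈ [a, s₀] (γ is a circular arc of radius 1 between γ(a) and γ(s₀)). -/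
open Set Filter MeasureTheory
open scoped RealInnerProductSpace Topology ENNReal

noncomputable section

/-- Euclidean space `ℝⁿ`. -/
abbrev Euc (n : ℕ) := EuclideanSpace ℝ (Fin n)

/-- Generalized curvature `κγ(s)` of a curve with derivative `γd` and parameter domain `D`:
the limsup, as `x, y → s` with `x ≠ y`, of `∠(γd x, γd y) / |x - y|`, expressed as the
infimum of all eventual bounds. -/
def curvAt {n : ℕ} (γd : ℝ → Euc n) (D : Set ℝ) (s : ℝ) : ℝ :=
  sInf {Λ : ℝ | 0 ≤ Λ ∧ ∃ δ > 0, ∀ x ∈ D, ∀ y ∈ D, x ≠ y →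
    |x - s| < δ → |y - s| < δ →
    InnerProductGeometry.angle (γd x) (γd y) ≤ Λ * |x - y|}

/-- `κγ(s) < Λ`: there are `δ > 0` and `Λ' < Λ` bounding the angle dilation near `s`. -/
def CurvLt {n : ℕ} (γd : ℝ → Euc n) (D : Set ℝ) (s Λ : ℝ) : Prop :=
  ∃ δ > 0, ∃ Λ' < Λ, ∀ x ∈ D, ∀ y ∈ D, x ≠ y → |x - s| < δ → |y - s| < δ →
    InnerProductGeometry.angle (γd x) (γd y) ≤ Λ' * |x - y|

/-- `f` restricted to `[a, c]` is a planar circular arc of radius `1/Λ`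
of length in `[0, 2π/Λ)`. -/
def IsArc {n : ℕ} (Λ : ℝ) (f : ℝ → Euc n) (a c : ℝ) : Prop :=
  c - a < 2 * Real.pi / Λ ∧
  ∃ (o u e : Euc n) (s₁ : ℝ), ‖u‖ = 1 ∧ ‖e‖ = 1 ∧ ⟪u, e⟫ = 0 ∧
    ∀ s ∈ Icc a c,
      f s = o + (Λ⁻¹ * Real.cos (Λ * (s - s₁))) • u + (Λ⁻¹ * Real.sin (Λ * (s - s₁))) • e

/-- `f` restricted to `[a, c]` is a planar circular arc of radius `r`. -/
def IsArcR {n : ℕ} (r : ℝ) (f : ℝ → Euc n) (a c : ℝ) : Prop :=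
  ∃ (o u e : Euc n) (s₁ : ℝ), ‖u‖ = 1 ∧ ‖e‖ = 1 ∧ ⟪u, e⟫ = 0 ∧
    ∀ s ∈ Icc a c,
      f s = o + (r * Real.cos ((s - s₁) / r)) • u + (r * Real.sin ((s - s₁) / r)) • e

/-- `O_p(v, r)`: the union of the open balls of radius `r` tangent to `v^⊥` at `p`. -/
def Odisk {n : ℕ} (p v : Euc n) (r : ℝ) : Set (Euc n) :=
  {x | ∃ w : Euc n, ‖w‖ = 1 ∧ ⟪w, v⟫ = 0 ∧ ‖x - p - r • w‖ < r}

/-- Ball radius `R_O` of the curve `f` (with derivative/tangent field `γd`) on domain `D`. -/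
def RO {n : ℕ} (f γd : ℝ → Euc n) (D : Set ℝ) : ℝ :=
  sInf {r : ℝ | 0 < r ∧ ∃ s ∈ D, ∃ t ∈ D, ∃ w : Euc n,
    ‖w‖ = 1 ∧ ⟪w, γd s⟫ = 0 ∧ ‖f t - f s - r • w‖ < r}

/-- Minimal double critical distance of the curve `f` with tangent field `γd`. -/
def MDC {n : ℕ} (f γd : ℝ → Euc n) : ℝ :=
  sInf {d : ℝ | ∃ x y : ℝ, f x ≠ f y ∧ ⟪f x - f y, γd x⟫ = 0 ∧
    ⟪f x - f y, γd y⟫ = 0 ∧ d = ‖f x - f y‖}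

/-- Normal injectivity radius `i(K, ℝⁿ)` of the curve `f` with tangent field `γd`. -/
def injRad {n : ℕ} (f γd : ℝ → Euc n) : ℝ :=
  sSup ({0} ∪ {r : ℝ | 0 < r ∧ ∀ s t : ℝ, ∀ u w : Euc n,
    ⟪u, γd s⟫ = 0 → ⟪w, γd t⟫ = 0 → ‖u‖ < r → ‖w‖ < r →
    f s + u = f t + w → f s = f t ∧ u = w})

/-- A knot: a simple closed unit-speed `C^{1,1}` curve, as an `L`-periodic map `ℝ → ℝⁿ`,
injective on `[0, L)`, with `‖γ'‖ ≡ 1` and `γ'` Lipschitz. -/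
structure Knot (n : ℕ) where
  L : ℝ
  Lpos : 0 < L
  f : ℝ → Euc n
  fd : ℝ → Euc n
  per : ∀ s, f (s + L) = f s
  perd : ∀ s, fd (s + L) = fd s
  deriv : ∀ s, HasDerivAt f (fd s) s
  unit : ∀ s, ‖fd s‖ = 1
  lipd : ∃ C : NNReal, LipschitzWith C fd
  inj : InjOn f (Ico 0 L)

/-- Ropelength `ℓ_e(γ) = L / R_O(K)`. -/
def Knot.ropelength {n : ℕ} (k : Knot n) : ℝ := k.L / RO k.f k.fd univ

/-- The set `I_c` of parameters realizing the minimal double critical distance. -/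
def Knot.Ic {n : ℕ} (k : Knot n) : Set ℝ :=
  {x | ∃ y : ℝ, k.f x ≠ k.f y ∧ ⟪k.f x - k.f y, k.fd x⟫ = 0 ∧
    ⟪k.f x - k.f y, k.fd y⟫ = 0 ∧ ‖k.f x - k.f y‖ = MDC k.f k.fd}

/-- `sup_s κγ(s)` for a knot. -/
def Knot.supCurv {n : ℕ} (k : Knot n) : ℝ := ⨆ s : ℝ, curvAt k.fd univ s

/-- Analytic focal distance `F_k(γ) = (sup_s κγ(s))⁻¹`. -/
def Knot.Fk {n : ℕ} (k : Knot n) : ℝ := (k.supCurv)⁻¹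

/-- Two knots are in the same knot class: after rescaling their domains to `ℝ/ℤ`
(realized by `1`-periodic maps `ℝ → ℝⁿ`), they are joined by a continuous homotopy
through injective loops. -/
def SameKnotClass {n : ℕ} (k₁ k₂ : Knot n) : Prop :=
  ∃ H : ℝ → ℝ → Euc n,
    ContinuousOn (fun z : ℝ × ℝ => H z.1 z.2) (Icc 0 1 ×ˢ univ) ∧
    (∀ t s, H t (s + 1) = H t s) ∧
    (∀ s, H 0 s = k₁.f (k₁.L * s)) ∧
    (∀ s, H 1 s = k₂.f (k₂.L * s)) ∧
    ∀ t ∈ Icc (0 : ℝ) 1, InjOn (H t) (Ico 0 1)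

/-- A knot is relatively extremal: a relative minimum of ropelength within its knot class
with respect to the `C¹` topology (on rescaled parametrizations). -/
def RelativelyExtremal {n : ℕ} (k : Knot n) : Prop :=
  ∃ ε > 0, ∀ η : Knot n, SameKnotClass k η →
    (∀ s : ℝ, ‖η.f (η.L * s) - k.f (k.L * s)‖ +
      ‖η.L • η.fd (η.L * s) - k.L • k.fd (k.L * s)‖ < ε) →
    k.ropelength ≤ η.ropelength

/-- The class `C(p, q; v, w; Λ)`: unit-speed `C^{1,1}` curves `γ : [0, L] → ℝⁿ`
(`L` not fixed) from `p` to `q` with initial/terminal directions `v, w`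
and `Λ`-Lipschitz derivative (curvature at most `Λ`). -/
structure CurveCC (n : ℕ) (p q v w : Euc n) (Λ : ℝ) where
  L : ℝ
  Lnn : 0 ≤ L
  f : ℝ → Euc n
  fd : ℝ → Euc n
  deriv : ∀ s ∈ Icc (0 : ℝ) L, HasDerivWithinAt f (fd s) (Icc 0 L) s
  unit : ∀ s ∈ Icc (0 : ℝ) L, ‖fd s‖ = 1
  lip : LipschitzOnWith Λ.toNNReal fd (Icc 0 L)
  i0 : f 0 = p
  id0 : fd 0 = v
  iL : f L = q
  idL : fd L = w

/-- A `C¹` closed curve of period `L` with nowhere-vanishing derivative. -/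
structure ClosedC1 (n : ℕ) (L : ℝ) where
  f : ℝ → Euc n
  fd : ℝ → Euc n
  per : ∀ s, f (s + L) = f s
  perd : ∀ s, fd (s + L) = fd s
  deriv : ∀ s, HasDerivAt f (fd s) s
  nz : ∀ s, fd s ≠ 0

/-- A simple closed `C^{1,1}` curve of period `L` with nowhere-vanishing derivative. -/
structure ClosedC11 (n : ℕ) (L : ℝ) extends ClosedC1 n L where
  lipd : ∃ C : NNReal, LipschitzWith C fd
  inj : InjOn f (Ico 0 L)

/-- The unit tangent field of `c` is `C`-Lipschitz with respect to the arclength of `c`. -/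
def TangentLip {n : ℕ} {L : ℝ} (c : ClosedC1 n L) (C : ℝ) : Prop :=
  ∀ x y : ℝ, x ≤ y →
    ‖‖c.fd y‖⁻¹ • c.fd y - ‖c.fd x‖⁻¹ • c.fd x‖ ≤ C * ∫ t in x..y, ‖c.fd t‖

/-- Pointwise geometric focal distance `F_g(γ(s))` of the curve `f` with domain `D`. -/
def FgPt {n : ℕ} (f fd : ℝ → Euc n) (D : Set ℝ) (s : ℝ) : ℝ :=
  sInf {r : ℝ | 0 < r ∧ f s ∈ closure (Odisk (f s) (fd s) r ∩ (f '' D))}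

end

/-!
Prepend to `γ'` on `[s - π, a]` the unit tangent of the unit circle through `γ(a)` with centre
`γ(a) + w`. The result `G` is a unit, `1`-Lipschitz field on an interval of length `π`; such a field
turns by at most the parameter distance, so `⟪G t, G u⟫ ≥ cos (t - u)`, and integrating twice gives
`‖∫ G‖² ≥ ∫∫ cos (t - u) = 4`. Since `∫ G = (γ(s) - γ(a) - w) + Y` with `‖Y‖ = 1`, this is
`‖γ(s) - γ(a) - w‖ ≥ 1`. In the equality case every bound `⟪G t, G u⟫ ≥ cos (t - u)` is attained,
which forces `γ'` to run along the great circle `cos (t - a) • γ'(a) + sin (t - a) • w`.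
-/
open Real InnerProductGeometry

variable {E : Type*} [NormedAddCommGroup E] [InnerProductSpace ℝ E]

lemma cos_add_sq_le {h : ℝ} (h0 : 0 ≤ h) (h1 : h ≤ 1 / 2) :
    cos (h + h ^ 2) ≤ 1 - h ^ 2 / 2 := by
  have hx : |h + h ^ 2| ≤ 1 := by rw [abs_of_nonneg (by positivity)]; nlinarith
  have hcos := (abs_le.mp (cos_bound hx)).2
  rw [abs_of_nonneg (by positivity : 0 ≤ h + h ^ 2)] at hcos
  have h32 : (1 + h) ^ 4 ≤ (3 / 2) ^ 4 := by gcongr; linarith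
  have hh : (h + h ^ 2) ^ 4 ≤ 6 * h ^ 4 := by
    calc (h + h ^ 2) ^ 4 = h ^ 4 * (1 + h) ^ 4 := by ring
    _ ≤ h ^ 4 * 6 := by gcongr; linarith
    _ = 6 * h ^ 4 := by ring
  nlinarith [pow_nonneg h0 3, pow_nonneg h0 4]

lemma angle_le_add_sq_of_norm_sub_le {a b : E} (ha : ‖a‖ = 1) (hb : ‖b‖ = 1) {h : ℝ}
    (h0 : 0 ≤ h) (h1 : h ≤ 1 / 2) (hab : ‖a - b‖ ≤ h) : angle a b ≤ h + h ^ 2 := by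
  have hinner : 1 - h ^ 2 / 2 ≤ ⟪a, b⟫ := by
    have := norm_sub_sq_real a b
    rw [ha, hb] at this
    nlinarith [norm_nonneg (a - b)]
  rw [angle, ha, hb, mul_one, div_one,
    ← arccos_cos (by positivity) (by nlinarith [pi_gt_three] : h + h ^ 2 ≤ π)]
  exact arccos_le_arccos ((cos_add_sq_le h0 h1).trans hinner)

section LipschitzUnitField

variable {T : ℝ → E} {s : Set ℝ}

lemma angle_le_add_sq_div_two_pow (hs : s.OrdConnected) (hunit : ∀ t ∈ s, ‖T t‖ = 1)
    (hlip : LipschitzOnWith 1 T s) (k : ℕ) {x y : ℝ} (hx : x ∈ s) (hy : y ∈ s) (hxy : x ≤ y)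
    (hk : y - x ≤ 2 ^ k / 2) : angle (T x) (T y) ≤ (y - x) + (y - x) ^ 2 / 2 ^ k := by
  induction k generalizing x y with
  | zero =>
    have hd : ‖T x - T y‖ ≤ y - x := by
      simpa [← dist_eq_norm, Real.dist_eq, abs_of_nonpos (sub_nonpos.2 hxy)] using
        hlip.dist_le_mul x hx y hy
    simpa using angle_le_add_sq_of_norm_sub_le (hunit x hx) (hunit y hy) (sub_nonneg.2 hxy)
      (by simpa using hk) hd
  | succ k ih =>
    set m := (x + y) / 2 with hm_def
    have hm : m ∈ s := hs.out hx hy ⟨by linarith, by linarith⟩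
    rw [pow_succ] at hk
    calc angle (T x) (T y) ≤ angle (T x) (T m) + angle (T m) (T y) :=
          angle_le_angle_add_angle _ _ _
    _ ≤ ((m - x) + (m - x) ^ 2 / 2 ^ k) + ((y - m) + (y - m) ^ 2 / 2 ^ k) :=
          add_le_add (ih hx hm (by linarith) (by linarith)) (ih hm hy (by linarith) (by linarith))
    _ = (y - x) + (y - x) ^ 2 / 2 ^ (k + 1) := by simp only [m]; field_simp; ring

lemma angle_le_of_lipschitzOnWith (hs : s.OrdConnected) (hunit : ∀ t ∈ s, ‖T t‖ = 1)
    (hlip : LipschitzOnWith 1 T s) {x y : ℝ} (hx : x ∈ s) (hy : y ∈ s) (hxy : x ≤ y) :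
    angle (T x) (T y) ≤ y - x := by
  have h2pow := tendsto_pow_atTop_atTop_of_one_lt (one_lt_two : (1 : ℝ) < 2)
  have hlim : Tendsto (fun k : ℕ => (y - x) + (y - x) ^ 2 / 2 ^ k) atTop (𝓝 (y - x)) := by
    simpa using tendsto_const_nhds.add (tendsto_const_nhds.div_atTop h2pow)
  refine ge_of_tendsto hlim ?_
  filter_upwards [h2pow.eventually_ge_atTop (2 * (y - x))] with k hk
  exact angle_le_add_sq_div_two_pow hs hunit hlip k hx hy hxy (by linarith)

lemma cos_sub_le_inner_of_lipschitzOnWith (hs : s.OrdConnected) (hunit : ∀ t ∈ s, ‖T t‖ = 1)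
    (hlip : LipschitzOnWith 1 T s) {x y : ℝ} (hx : x ∈ s) (hy : y ∈ s) (hπ : |x - y| ≤ π) :
    cos (x - y) ≤ ⟪T x, T y⟫ := by
  have hangle : angle (T x) (T y) ≤ |x - y| := by
    rcases le_total x y with h | h
    · rw [abs_sub_comm, abs_of_nonneg (sub_nonneg.2 h)]
      exact angle_le_of_lipschitzOnWith hs hunit hlip hx hy h
    · rw [angle_comm, abs_of_nonneg (sub_nonneg.2 h)]
      exact angle_le_of_lipschitzOnWith hs hunit hlip hy hx h
  rw [inner_eq_cos_angle_of_norm_eq_one (hunit x hx) (hunit y hy), ← cos_abs]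
  exact cos_le_cos_of_nonneg_of_le_pi (angle_nonneg _ _) hπ hangle

end LipschitzUnitField

noncomputable def greatCircle (u w : E) (θ : ℝ) : E := cos θ • u + sin θ • w

section GreatCircle

variable {u w : E}

lemma integral_greatCircle [CompleteSpace E] (x y : ℝ) :
    ∫ θ in x..y, greatCircle u w θ = (sin y - sin x) • u + (cos x - cos y) • w := by
  simp only [greatCircle]
  rw [intervalIntegral.integral_add (Continuous.intervalIntegrable (by fun_prop) _ _)
      (Continuous.intervalIntegrable (by fun_prop) _ _),
    intervalIntegral.integral_smul_const, intervalIntegral.integral_smul_const, integral_cos,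
    integral_sin]

variable (hu : ‖u‖ = 1) (hw : ‖w‖ = 1) (huw : ⟪u, w⟫ = 0)
include hu hw huw

lemma inner_greatCircle (θ φ : ℝ) :
    ⟪greatCircle u w θ, greatCircle u w φ⟫ = cos (θ - φ) := by
  have huu : ⟪u, u⟫ = 1 := by rw [real_inner_self_eq_norm_sq, hu, one_pow]
  have hww : ⟪w, w⟫ = 1 := by rw [real_inner_self_eq_norm_sq, hw, one_pow]
  simp only [greatCircle, inner_add_left, inner_add_right, real_inner_smul_left,
    real_inner_smul_right, huu, hww, huw, real_inner_comm u w, cos_sub]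
  ring

lemma norm_greatCircle (θ : ℝ) : ‖greatCircle u w θ‖ = 1 := by
  have := inner_greatCircle hu hw huw θ θ
  rwa [sub_self, cos_zero, real_inner_self_eq_norm_sq,
    pow_eq_one_iff_of_nonneg (norm_nonneg _) two_ne_zero] at this

lemma lipschitzWith_greatCircle : LipschitzWith 1 (greatCircle u w) := by
  refine LipschitzWith.of_dist_le_mul fun θ φ => ?_
  rw [dist_eq_norm, Real.dist_eq, NNReal.coe_one, one_mul]
  have hsq : ‖greatCircle u w θ - greatCircle u w φ‖ ^ 2 = 2 - 2 * cos (θ - φ) := by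
    rw [norm_sub_sq_real, norm_greatCircle hu hw huw, norm_greatCircle hu hw huw,
      inner_greatCircle hu hw huw]
    ring
  refine (sq_le_sq₀ (norm_nonneg _) (abs_nonneg _)).1 ?_
  rw [hsq, sq_abs]
  linarith [one_sub_sq_div_two_le_cos (x := θ - φ)]

lemma eq_greatCircle_of_inner {g : E} (hg : ‖g‖ = 1) {θ : ℝ} (hgu : ⟪g, u⟫ = cos θ)
    (hgw : ⟪g, w⟫ = sin θ) : g = greatCircle u w θ := by
  have hsq : ‖g - greatCircle u w θ‖ ^ 2 = 0 := by
    rw [norm_sub_sq_real, hg, norm_greatCircle hu hw huw]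
    simp only [greatCircle, inner_add_right, real_inner_smul_right, hgu, hgw]
    nlinarith [sin_sq_add_cos_sq θ]
  exact sub_eq_zero.1 (norm_eq_zero.1 (pow_eq_zero_iff two_ne_zero |>.1 hsq))

end GreatCircle

lemma integral_cos_sub_over_pi (q u : ℝ) : ∫ t in q - π..q, cos (t - u) = 2 * sin (q - u) := by
  rw [intervalIntegral.integral_comp_sub_right, integral_cos,
    show q - π - u = -(π - (q - u)) by ring, sin_neg, sin_pi_sub]
  ring

lemma integral_two_mul_sin_sub_over_pi (q : ℝ) : ∫ u in q - π..q, 2 * sin (q - u) = 4 := by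
  rw [intervalIntegral.integral_const_mul, intervalIntegral.integral_comp_sub_left, integral_sin]
  norm_num

lemma eqOn_of_le_of_integral_eq {f g : ℝ → ℝ} {a b : ℝ} (hab : a < b)
    (hf : ContinuousOn f (Icc a b)) (hg : ContinuousOn g (Icc a b))
    (hle : ∀ x ∈ Icc a b, f x ≤ g x) (heq : ∫ x in a..b, f x = ∫ x in a..b, g x) :
    EqOn f g (Icc a b) := by
  intro c hc
  by_contra hne
  exact (intervalIntegral.integral_lt_integral_of_continuousOn_of_le_of_exists_lt hab hf hg
    (fun x hx => hle x (Ioc_subset_Icc_self hx)) ⟨c, hc, (hle c hc).lt_of_ne hne⟩).ne heq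

section HalfTurn

variable [CompleteSpace E] {G : ℝ → E} {q : ℝ}

lemma inner_intervalIntegral {p : ℝ} (hG : ContinuousOn G (Icc p q)) (hpq : p ≤ q) (c : E) :
    ⟪c, ∫ t in p..q, G t⟫ = ∫ t in p..q, ⟪c, G t⟫ :=
  ((innerSL ℝ c).intervalIntegral_comp_comm (hG.intervalIntegrable_of_Icc hpq)).symm

variable (hG : ContinuousOn G (Icc (q - π) q))
  (hcos : ∀ t ∈ Icc (q - π) q, ∀ u ∈ Icc (q - π) q, cos (t - u) ≤ ⟪G t, G u⟫)
include hG hcos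

lemma two_mul_sin_sub_le_inner_integral {u : ℝ} (hu : u ∈ Icc (q - π) q) :
    2 * sin (q - u) ≤ ⟪∫ t in q - π..q, G t, G u⟫ := by
  have hπ : q - π ≤ q := by linarith [pi_pos]
  rw [real_inner_comm, inner_intervalIntegral hG hπ, ← integral_cos_sub_over_pi q u]
  refine intervalIntegral.integral_mono_on hπ (Continuous.intervalIntegrable (by fun_prop) _ _)
    ((continuousOn_const.inner hG).intervalIntegrable_of_Icc hπ) fun t ht => ?_
  rw [real_inner_comm]
  exact hcos t ht u hu

lemma four_le_norm_integral_sq : 4 ≤ ‖∫ t in q - π..q, G t‖ ^ 2 := by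
  have hπ : q - π ≤ q := by linarith [pi_pos]
  rw [← real_inner_self_eq_norm_sq, inner_intervalIntegral hG hπ,
    ← integral_two_mul_sin_sub_over_pi q]
  exact intervalIntegral.integral_mono_on hπ (Continuous.intervalIntegrable (by fun_prop) _ _)
    ((continuousOn_const.inner hG).intervalIntegrable_of_Icc hπ)
    fun u hu => two_mul_sin_sub_le_inner_integral hG hcos hu

lemma inner_eq_cos_sub_of_norm_integral_sq_eq_four (h4 : ‖∫ t in q - π..q, G t‖ ^ 2 = 4) :
    ∀ t ∈ Icc (q - π) q, ∀ u ∈ Icc (q - π) q, ⟪G t, G u⟫ = cos (t - u) := by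
  have hπ : q - π < q := by linarith [pi_pos]
  set V := ∫ t in q - π..q, G t
  have hrow : EqOn (fun u => 2 * sin (q - u)) (fun u => ⟪V, G u⟫) (Icc (q - π) q) := by
    refine eqOn_of_le_of_integral_eq hπ (by fun_prop) (continuousOn_const.inner hG)
      (fun u hu => two_mul_sin_sub_le_inner_integral hG hcos hu) ?_
    rw [integral_two_mul_sin_sub_over_pi, ← inner_intervalIntegral hG hπ.le,
      real_inner_self_eq_norm_sq, h4]
  intro t ht u hu
  refine (eqOn_of_le_of_integral_eq hπ (by fun_prop) (hG.inner continuousOn_const)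
    (fun t ht => hcos t ht u hu) ?_ ht).symm
  rw [integral_cos_sub_over_pi, show 2 * sin (q - u) = ⟪V, G u⟫ from hrow hu, real_inner_comm,
    inner_intervalIntegral hG hπ.le]
  simp_rw [real_inner_comm (G u)]

end HalfTurn

lemma LipschitzOnWith.Icc_union_Icc {F : Type*} [PseudoMetricSpace F] {g : ℝ → F} {K : NNReal}
    {p a s : ℝ} (h₁ : LipschitzOnWith K g (Icc p a)) (h₂ : LipschitzOnWith K g (Icc a s)) :
    LipschitzOnWith K g (Icc p s) := by
  have key : ∀ x ∈ Icc p s, ∀ y ∈ Icc p s, x ≤ y → dist (g x) (g y) ≤ K * dist x y := by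
    intro x hx y hy hxy
    rcases le_total y a with hya | hay
    · exact h₁.dist_le_mul x ⟨hx.1, hxy.trans hya⟩ y ⟨hx.1.trans hxy, hya⟩
    rcases le_total a x with hax | hxa
    · exact h₂.dist_le_mul x ⟨hax, hx.2⟩ y ⟨hay, hy.2⟩
    calc dist (g x) (g y) ≤ dist (g x) (g a) + dist (g a) (g y) := dist_triangle _ _ _
    _ ≤ K * dist x a + K * dist a y :=
        add_le_add (h₁.dist_le_mul x ⟨hx.1, hxa⟩ a ⟨hx.1.trans hxa, le_rfl⟩)
          (h₂.dist_le_mul a ⟨le_rfl, hay.trans hy.2⟩ y ⟨hay, hy.2⟩)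
    _ = K * dist x y := by
        rw [Real.dist_eq, Real.dist_eq, Real.dist_eq, abs_of_nonpos (by linarith),
          abs_of_nonpos (by linarith), abs_of_nonpos (by linarith)]
        ring
  refine LipschitzOnWith.of_dist_le_mul fun x hx y hy => ?_
  rcases le_total x y with hxy | hyx
  · exact key x hx y hy hxy
  · rw [dist_comm, dist_comm x]
    exact key y hy x hx hyx

noncomputable def arcExtension (f' : ℝ → E) (w : E) (a t : ℝ) : E :=
  if t ≤ a then greatCircle (f' a) w (t - a) else f' t

lemma arcExtension_of_le {f' : ℝ → E} {w : E} {a t : ℝ} (ht : t ≤ a) :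
    arcExtension f' w a t = greatCircle (f' a) w (t - a) := if_pos ht

lemma arcExtension_of_ge {f' : ℝ → E} {w : E} {a t : ℝ} (ht : a ≤ t) :
    arcExtension f' w a t = f' t := by
  unfold arcExtension
  split_ifs with h
  · simp [greatCircle, le_antisymm h ht]
  · rfl

structure IsUnitSpeedCurvatureLeOne (f f' : ℝ → E) (I : Set ℝ) : Prop where
  hasDerivWithinAt : ∀ t ∈ I, HasDerivWithinAt f (f' t) I t
  norm_eq_one : ∀ t ∈ I, ‖f' t‖ = 1
  lipschitzOnWith : LipschitzOnWith 1 f' I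

namespace IsUnitSpeedCurvatureLeOne

variable {f f' : ℝ → E} {I J : Set ℝ} {a s : ℝ} {w : E}

lemma mono (hγ : IsUnitSpeedCurvatureLeOne f f' I) (hJI : J ⊆ I) :
    IsUnitSpeedCurvatureLeOne f f' J where
  hasDerivWithinAt t ht := (hγ.hasDerivWithinAt t (hJI ht)).mono hJI
  norm_eq_one t ht := hγ.norm_eq_one t (hJI ht)
  lipschitzOnWith := hγ.lipschitzOnWith.mono hJI

lemma comp_neg (hγ : IsUnitSpeedCurvatureLeOne f f' (Icc s a)) :
    IsUnitSpeedCurvatureLeOne (fun t => f (-t)) (fun t => -f' (-t)) (Icc (-a) (-s)) := by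
  have hmaps : MapsTo Neg.neg (Icc (-a) (-s)) (Icc s a) :=
    fun x hx => ⟨by linarith [hx.2], by linarith [hx.1]⟩
  refine ⟨fun t ht => ?_, fun t ht => ?_, LipschitzOnWith.of_dist_le_mul fun x hx y hy => ?_⟩
  · simpa [Function.comp_def] using
      (hγ.hasDerivWithinAt (-t) (hmaps ht)).scomp t (hasDerivWithinAt_neg t _) hmaps
  · rw [norm_neg]
    exact hγ.norm_eq_one _ (hmaps ht)
  · rw [dist_neg_neg, ← dist_neg_neg x]
    exact hγ.lipschitzOnWith.dist_le_mul _ (hmaps hx) _ (hmaps hy)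

lemma norm_arcExtension (hγ : IsUnitSpeedCurvatureLeOne f f' (Icc a s)) (has : a ≤ s)
    (hw : ‖w‖ = 1) (hwa : ⟪w, f' a⟫ = 0) {t : ℝ} (ht : t ≤ s) :
    ‖arcExtension f' w a t‖ = 1 := by
  rcases le_total t a with hta | hat
  · rw [arcExtension_of_le hta,
      norm_greatCircle (hγ.norm_eq_one a ⟨le_rfl, has⟩) hw (by rwa [real_inner_comm])]
  · rw [arcExtension_of_ge hat]
    exact hγ.norm_eq_one t ⟨hat, ht⟩

lemma lipschitzOnWith_arcExtension (hγ : IsUnitSpeedCurvatureLeOne f f' (Icc a s))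
    (has : a ≤ s) (hw : ‖w‖ = 1) (hwa : ⟪w, f' a⟫ = 0) (p : ℝ) :
    LipschitzOnWith 1 (arcExtension f' w a) (Icc p s) := by
  have hcircle := lipschitzWith_greatCircle (hγ.norm_eq_one a ⟨le_rfl, has⟩) hw
    (by rwa [real_inner_comm])
  refine LipschitzOnWith.Icc_union_Icc (a := a) (LipschitzOnWith.of_dist_le_mul
    fun x hx y hy => ?_) (LipschitzOnWith.of_dist_le_mul fun x hx y hy => ?_)
  · rw [arcExtension_of_le hx.2, arcExtension_of_le hy.2]
    simpa [Real.dist_eq] using hcircle.dist_le_mul (x - a) (y - a)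
  · rw [arcExtension_of_ge hx.1, arcExtension_of_ge hy.1]
    exact hγ.lipschitzOnWith.dist_le_mul x hx y hy

lemma cos_sub_le_inner_arcExtension (hγ : IsUnitSpeedCurvatureLeOne f f' (Icc a s))
    (has : a ≤ s) (hw : ‖w‖ = 1) (hwa : ⟪w, f' a⟫ = 0) :
    ∀ t ∈ Icc (s - π) s, ∀ u ∈ Icc (s - π) s,
      cos (t - u) ≤ ⟪arcExtension f' w a t, arcExtension f' w a u⟫ :=
  fun _ ht _ hu => cos_sub_le_inner_of_lipschitzOnWith ordConnected_Icc
    (fun _ ht => hγ.norm_arcExtension has hw hwa ht.2)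
    (hγ.lipschitzOnWith_arcExtension has hw hwa _)
    ht hu (abs_sub_le_iff.2 ⟨by linarith [ht.2, hu.1], by linarith [ht.1, hu.2]⟩)

variable [CompleteSpace E]

lemma integral_eq_sub (hγ : IsUnitSpeedCurvatureLeOne f f' (Icc a s)) (has : a ≤ s) :
    ∫ t in a..s, f' t = f s - f a :=
  intervalIntegral.integral_eq_sub_of_hasDerivAt_of_le has
    (fun t ht => (hγ.hasDerivWithinAt t ht).continuousWithinAt)
    (fun t ht => (hγ.hasDerivWithinAt t (Ioo_subset_Icc_self ht)).hasDerivAt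
      (Icc_mem_nhds ht.1 ht.2))
    (hγ.lipschitzOnWith.continuousOn.intervalIntegrable_of_Icc has)

lemma integral_arcExtension (hγ : IsUnitSpeedCurvatureLeOne f f' (Icc a s)) (has : a ≤ s)
    (hw : ‖w‖ = 1) (hwa : ⟪w, f' a⟫ = 0) {p : ℝ} (hpa : p ≤ a) :
    ∫ t in p..s, arcExtension f' w a t =
      (f s - f a - w) + greatCircle (f' a) w (p - a + π / 2) := by
  have hint := (hγ.lipschitzOnWith_arcExtension has hw hwa p).continuousOn
  rw [← intervalIntegral.integral_add_adjacent_intervals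
      ((hint.mono (Icc_subset_Icc le_rfl has)).intervalIntegrable_of_Icc hpa)
      ((hint.mono (Icc_subset_Icc hpa le_rfl)).intervalIntegrable_of_Icc has),
    intervalIntegral.integral_congr (g := fun t => greatCircle (f' a) w (t - a))
      fun t ht => arcExtension_of_le (by rw [uIcc_of_le hpa] at ht; exact ht.2),
    intervalIntegral.integral_congr (g := f')
      fun t ht => arcExtension_of_ge (by rw [uIcc_of_le has] at ht; exact ht.1),
    hγ.integral_eq_sub has, intervalIntegral.integral_comp_sub_right, integral_greatCircle]
  simp only [greatCircle, sub_self, sin_zero, cos_zero, cos_add_pi_div_two, sin_add_pi_div_two]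
  module

theorem one_le_norm_sub_sub (hγ : IsUnitSpeedCurvatureLeOne f f' (Icc a s)) (has : a ≤ s)
    (hsa : s - a ≤ π) (hw : ‖w‖ = 1) (hwa : ⟪w, f' a⟫ = 0) : 1 ≤ ‖f s - f a - w‖ := by
  have h4 := four_le_norm_integral_sq
    (hγ.lipschitzOnWith_arcExtension has hw hwa _).continuousOn
    (hγ.cos_sub_le_inner_arcExtension has hw hwa)
  rw [hγ.integral_arcExtension has hw hwa (by linarith)] at h4
  have htri := norm_add_le (f s - f a - w) (greatCircle (f' a) w (s - π - a + π / 2))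
  rw [norm_greatCircle (hγ.norm_eq_one a ⟨le_rfl, has⟩) hw (by rwa [real_inner_comm])] at htri
  nlinarith [norm_nonneg (f s - f a - w + greatCircle (f' a) w (s - π - a + π / 2))]

theorem one_le_norm_sub_sub_of_abs_le {I : Set ℝ} (hγ : IsUnitSpeedCurvatureLeOne f f' I)
    (hI : I.OrdConnected) (ha : a ∈ I) (hs : s ∈ I) (hsa : |s - a| ≤ π) (hw : ‖w‖ = 1)
    (hwa : ⟪w, f' a⟫ = 0) : 1 ≤ ‖f s - f a - w‖ := by
  rcases le_total a s with has | hsa'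
  · exact (hγ.mono (hI.out ha hs)).one_le_norm_sub_sub has ((le_abs_self _).trans hsa) hw hwa
  · rw [abs_sub_comm] at hsa
    simpa using (hγ.mono (hI.out hs ha)).comp_neg.one_le_norm_sub_sub (neg_le_neg hsa')
      (by linarith [le_abs_self (a - s)]) hw (by simpa using hwa)

lemma eqOn_greatCircle_of_inner_eq_cos (hγ : IsUnitSpeedCurvatureLeOne f f' (Icc a s))
    (has : a < s) (hsa : s - a ≤ π) (hw : ‖w‖ = 1) (hwa : ⟪w, f' a⟫ = 0)
    (hgram : ∀ t ∈ Icc a s, ∀ u ∈ Icc a s, ⟪f' t, f' u⟫ = cos (t - u))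
    (hchord : f s - f a = sin (s - a) • f' a + (1 - cos (s - a)) • w) :
    ∀ v ∈ Icc a s, f' v = greatCircle (f' a) w (v - a) := by
  intro v hv
  have hva := hgram v hv a ⟨le_rfl, has.le⟩
  have hvchord : ⟪f' v, f s - f a⟫ = sin (v - a) - sin (v - s) := by
    rw [← hγ.integral_eq_sub has.le, inner_intervalIntegral hγ.lipschitzOnWith.continuousOn has.le,
      intervalIntegral.integral_congr (g := fun t => cos (v - t))
        fun t ht => hgram v hv t (by rwa [uIcc_of_le has.le] at ht),
      intervalIntegral.integral_comp_sub_left, integral_cos]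
  have hcos : cos (s - a) < 1 := by
    simpa using cos_lt_cos_of_nonneg_of_le_pi le_rfl hsa (sub_pos.2 has)
  have hvw : ⟪f' v, w⟫ = sin (v - a) := by
    rw [hchord, inner_add_right, real_inner_smul_right, real_inner_smul_right, hva,
      show v - s = (v - a) - (s - a) by ring, sin_sub (v - a)] at hvchord
    refine mul_left_cancel₀ (sub_pos.2 hcos).ne' ?_
    linear_combination hvchord
  exact eq_greatCircle_of_inner (hγ.norm_eq_one a ⟨le_rfl, has.le⟩) hw
    (by rwa [real_inner_comm]) (hγ.norm_eq_one v hv) hva hvw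

lemma eq_arc_of_eqOn_greatCircle (hγ : IsUnitSpeedCurvatureLeOne f f' (Icc a s))
    (htan : ∀ v ∈ Icc a s, f' v = greatCircle (f' a) w (v - a)) :
    ∀ u ∈ Icc a s, f u = f a + sin (u - a) • f' a + (1 - cos (u - a)) • w := by
  intro u hu
  rw [add_assoc, ← sub_eq_iff_eq_add',
    ← (hγ.mono (Icc_subset_Icc le_rfl hu.2)).integral_eq_sub hu.1,
    intervalIntegral.integral_congr fun t ht =>
      htan t (by rw [uIcc_of_le hu.1] at ht; exact ⟨ht.1, ht.2.trans hu.2⟩),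
    intervalIntegral.integral_comp_sub_right, integral_greatCircle, sub_self, sin_zero, cos_zero,
    sub_zero]

theorem eq_arc_of_norm_sub_sub_eq_one (hγ : IsUnitSpeedCurvatureLeOne f f' (Icc a s))
    (has : a < s) (hsa : s - a ≤ π) (hw : ‖w‖ = 1) (hwa : ⟪w, f' a⟫ = 0)
    (h1 : ‖f s - f a - w‖ = 1) :
    ∀ u ∈ Icc a s, f u = f a + sin (u - a) • f' a + (1 - cos (u - a)) • w := by
  set Y := greatCircle (f' a) w (s - π - a + π / 2)
  have hY : ‖Y‖ = 1 :=
    norm_greatCircle (hγ.norm_eq_one a ⟨le_rfl, has.le⟩) hw (by rwa [real_inner_comm]) _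
  have hcont := (hγ.lipschitzOnWith_arcExtension has.le hw hwa (s - π)).continuousOn
  have hcos := hγ.cos_sub_le_inner_arcExtension has.le hw hwa
  have hV := hγ.integral_arcExtension has.le hw hwa (p := s - π) (by linarith)
  have h2 : ‖f s - f a - w + Y‖ = 2 := by
    have h4 := four_le_norm_integral_sq hcont hcos
    rw [hV] at h4
    nlinarith [norm_add_le (f s - f a - w) Y, norm_nonneg (f s - f a - w + Y)]
  have hchord : f s - f a = sin (s - a) • f' a + (1 - cos (s - a)) • w := by
    rw [sub_eq_iff_eq_add.1 (eq_of_norm_eq_of_norm_add_eq (h1.trans hY.symm)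
      (by rw [h2, h1, hY]; norm_num))]
    simp only [Y, greatCircle, cos_add_pi_div_two, sin_add_pi_div_two,
      show s - π - a = (s - a) - π by ring, sin_sub_pi, cos_sub_pi]
    module
  have hgram := inner_eq_cos_sub_of_norm_integral_sq_eq_four hcont hcos
    (by rw [hV, h2]; norm_num)
  refine hγ.eq_arc_of_eqOn_greatCircle (hγ.eqOn_greatCircle_of_inner_eq_cos has hsa hw hwa
    (fun t ht u hu => ?_) hchord)
  simpa only [arcExtension_of_ge ht.1, arcExtension_of_ge hu.1] using
    hgram t ⟨by linarith [ht.1], ht.2⟩ u ⟨by linarith [hu.1], hu.2⟩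

end IsUnitSpeedCurvatureLeOne

theorem statement_9_general {n : ℕ} (L : ℝ) (f fd : ℝ → Euc n)
    (hderiv : ∀ s ∈ Set.Icc (0 : ℝ) L, HasDerivWithinAt f (fd s) (Set.Icc 0 L) s)
    (hunit : ∀ s ∈ Set.Icc (0 : ℝ) L, ‖fd s‖ = 1)
    (hlip : LipschitzOnWith 1 fd (Set.Icc 0 L)) :
    (∀ a ∈ Set.Icc (0 : ℝ) L, ∀ s ∈ Set.Icc (0 : ℝ) L, |s - a| ≤ Real.pi →
      ∀ w : Euc n, ‖w‖ = 1 → ⟪w, fd a⟫ = 0 → 1 ≤ ‖f s - f a - w‖) ∧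
    (∀ a ∈ Set.Icc (0 : ℝ) L, ∀ s₀ ∈ Set.Icc (0 : ℝ) L, a < s₀ → s₀ - a ≤ Real.pi →
      ((f s₀ ∉ Odisk (f a) (fd a) 1 ∧
          ∃ w : Euc n, ‖w‖ = 1 ∧ ⟪w, fd a⟫ = 0 ∧ ‖f s₀ - f a - w‖ = 1) ↔
        (∃ w : Euc n, ‖w‖ = 1 ∧ ⟪w, fd a⟫ = 0 ∧ ∀ s ∈ Set.Icc a s₀,
          f s = f a + Real.sin (s - a) • fd a + (1 - Real.cos (s - a)) • w))) := by
  have hγ : IsUnitSpeedCurvatureLeOne f fd (Icc 0 L) := ⟨hderiv, hunit, hlip⟩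
  have hfar : ∀ a ∈ Icc (0 : ℝ) L, ∀ s ∈ Icc (0 : ℝ) L, |s - a| ≤ π →
      ∀ w : Euc n, ‖w‖ = 1 → ⟪w, fd a⟫ = 0 → 1 ≤ ‖f s - f a - w‖ :=
    fun a ha s hs hsa w hw hwa => hγ.one_le_norm_sub_sub_of_abs_le ordConnected_Icc ha hs hsa hw hwa
  refine ⟨hfar, fun a ha s₀ hs₀ has hsa => ⟨?_, ?_⟩⟩
  · rintro ⟨-, w, hw, hwa, h1⟩
    exact ⟨w, hw, hwa,
      (hγ.mono (Icc_subset_Icc ha.1 hs₀.2)).eq_arc_of_norm_sub_sub_eq_one has hsa hw hwa h1⟩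
  · rintro ⟨w, hw, hwa, harc⟩
    refine ⟨fun ⟨w', hw', hw'a, hlt⟩ => ?_, w, hw, hwa, ?_⟩
    · have := hfar a ha s₀ hs₀ (by rwa [abs_of_pos (sub_pos.2 has)]) w' hw' hw'a
      rw [one_smul] at hlt
      linarith
    · rw [harc s₀ ⟨has.le, le_rfl⟩,
        show f a + sin (s₀ - a) • fd a + (1 - cos (s₀ - a)) • w - f a - w
          = greatCircle (fd a) w (s₀ - a - π / 2) by
          simp only [greatCircle, cos_sub_pi_div_two, sin_sub_pi_div_two]; module]
      exact norm_greatCircle (hunit a ha) hw (by rwa [real_inner_comm]) _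

/-- A unit-speed curve with curvature at most `1` stays outside
`O_{γ(a)}(γ'(a), 1)` for `|s - a| ≤ π`, and it touches the boundary of `O_{γ(a)}^c(γ'(a))`
at `γ(s₀)` (with `a < s₀ ≤ a + π`) iff it is a unit circular arc on `[a, s₀]`. -/
theorem statement_9 {n : ℕ} (hn : 2 ≤ n) (L : ℝ) (hL : 0 ≤ L) (f fd : ℝ → Euc n)
    (hderiv : ∀ s ∈ Set.Icc (0 : ℝ) L, HasDerivWithinAt f (fd s) (Set.Icc 0 L) s)
    (hunit : ∀ s ∈ Set.Icc (0 : ℝ) L, ‖fd s‖ = 1)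
    (hlip : LipschitzOnWith 1 fd (Set.Icc 0 L)) :
    (∀ a ∈ Set.Icc (0 : ℝ) L, ∀ s ∈ Set.Icc (0 : ℝ) L, |s - a| ≤ Real.pi →
      ∀ w : Euc n, ‖w‖ = 1 → ⟪w, fd a⟫ = 0 → 1 ≤ ‖f s - f a - w‖) ∧
    (∀ a ∈ Set.Icc (0 : ℝ) L, ∀ s₀ ∈ Set.Icc (0 : ℝ) L, a < s₀ → s₀ - a ≤ Real.pi →
      ((f s₀ ∉ Odisk (f a) (fd a) 1 ∧
          ∃ w : Euc n, ‖w‖ = 1 ∧ ⟪w, fd a⟫ = 0 ∧ ‖f s₀ - f a - w‖ = 1) ↔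
        (∃ w : Euc n, ‖w‖ = 1 ∧ ⟪w, fd a⟫ = 0 ∧ ∀ s ∈ Set.Icc a s₀,
          f s = f a + Real.sin (s - a) • fd a + (1 - Real.cos (s - a)) • w))) :=
  statement_9_general L f fd hderiv hunit hlip
end

section
/- Let γ : [0,L] → ℝⁿ (n ≥ 2) be a unit-speed C^{1,1} curve with γ' 1-Lipschitz (curvature at most 1). If ‖γ(0)‖ = ‖γ(L)‖ = 1 and ‖γ(a)‖ > 1 for some a ∈ [0,L], then L > π. -/
open Set Filter MeasureTheory
open scoped RealInnerProductSpace Topology ENNReal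

/-! Let `s` maximise `‖f‖` on `[0, L]`, so that `‖f s‖ > 1` and `f s ⊥ f' s`. Since `f'` is a
1-Lipschitz unit vector field, the angle it turns through in time `t` is at most `t`. Hence, for
`t ≤ π / 2`, the components of `f (s ± t)` along `±f' s` and along `f s` are at least those of the
unit circle tangent to the curve at `f s` with centre on the ray through `f s`, and that circle
stays outside the closed unit ball for a quarter turn. So `f` cannot reach the unit sphere within
time `π / 2` of `s` on either side, and both `s` and `L - s` exceed `π / 2`. -/

open InnerProductGeometry Real
open scoped NNReal

variable {V : Type*} [NormedAddCommGroup V] [InnerProductSpace ℝ V]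

theorem angle_le_two_mul_arcsin_of_norm_sub_le {v w : V} (hv : ‖v‖ = 1) (hw : ‖w‖ = 1)
    {δ : ℝ} (h : ‖v - w‖ ≤ δ) : angle v w ≤ 2 * arcsin (δ / 2) := by
  set θ := angle v w
  have hθ₀ := angle_nonneg v w
  have hθπ := angle_le_pi v w
  have hsin : 0 ≤ sin (θ / 2) := sin_nonneg_of_nonneg_of_le_pi (by linarith) (by linarith)
  have hchord : ‖v - w‖ = 2 * sin (θ / 2) := by
    have hlaw := norm_sub_sq_eq_norm_sq_add_norm_sq_sub_two_mul_norm_mul_norm_mul_cos_angle v w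
    have hcos : cos θ = 1 - 2 * sin (θ / 2) ^ 2 := by
      rw [← cos_sq_add_sin_sq (θ / 2), ← mul_div_cancel₀ θ (two_ne_zero' ℝ), cos_two_mul']
      ring_nf
    rw [hv, hw, hcos] at hlaw
    nlinarith [norm_nonneg (v - w)]
  have : θ / 2 ≤ arcsin (δ / 2) :=
    (le_arcsin_iff_sin_le' ⟨by linarith [pi_pos], by linarith⟩).2 (by linarith)
  linarith

theorem angle_le_nat_mul_two_mul_arcsin_of_lipschitzOnWith {g : ℝ → V} {K : ℝ≥0} {s : Set ℝ}
    [s.OrdConnected] (hg : LipschitzOnWith K g s) (hunit : ∀ t ∈ s, ‖g t‖ = 1) {h : ℝ}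
    (N : ℕ) {x y : ℝ} (hx : x ∈ s) (hy : y ∈ s) (hxy : x ≤ y) (hN : y - x ≤ N * h) :
    angle (g x) (g y) ≤ N * (2 * arcsin (K * h / 2)) := by
  induction N generalizing y with
  | zero =>
    obtain rfl : y = x := by push_cast at hN; linarith
    simp [angle_self (norm_ne_zero_iff.1 (by simp [hunit y hy] : ‖g y‖ ≠ 0))]
  | succ N ih =>
    have hh : 0 ≤ h := by push_cast at hN; nlinarith
    have hmx : max x (y - h) - x ≤ N * h := by
      rw [← max_sub_sub_right]
      exact max_le (by rw [sub_self]; positivity) (by push_cast at hN; linarith)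
    set m := max x (y - h)
    have hmy_le : m ≤ y := max_le hxy (by linarith)
    have hm : m ∈ s := Set.OrdConnected.out ‹_› hx hy ⟨le_max_left _ _, hmy_le⟩
    have hxm : angle (g x) (g m) ≤ N * (2 * arcsin (K * h / 2)) :=
      ih hm (le_max_left _ _) hmx
    have hmy : angle (g m) (g y) ≤ 2 * arcsin (K * h / 2) := by
      refine angle_le_two_mul_arcsin_of_norm_sub_le (hunit m hm) (hunit y hy) ?_
      rw [← dist_eq_norm]
      refine (hg.dist_le_mul m hm y hy).trans (mul_le_mul_of_nonneg_left ?_ K.2)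
      rw [Real.dist_eq, abs_sub_comm, abs_of_nonneg (sub_nonneg.2 hmy_le)]
      linarith [le_max_right x (y - h)]
    push_cast
    linarith [angle_le_angle_add_angle (g x) (g m) (g y)]

theorem tendsto_nat_mul_two_mul_arcsin (c : ℝ) :
    Tendsto (fun N : ℕ => N * (2 * arcsin (c / N / 2))) atTop (𝓝 c) := by
  have hderiv : HasDerivAt (fun t => 2 * arcsin (c * t / 2)) c 0 := by
    have := ((hasDerivAt_arcsin (by norm_num) (by norm_num)).comp (0 : ℝ)
      (((hasDerivAt_id (0 : ℝ)).const_mul c).div_const 2)).const_mul 2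
    simp only [mul_zero, zero_div, id, ne_eq, OfNat.ofNat_ne_zero, not_false_eq_true,
      zero_pow, sub_zero, Real.sqrt_one, div_one, mul_one] at this
    exact this.congr_deriv (by ring)
  have hinv : Tendsto (fun N : ℕ => (N : ℝ)⁻¹) atTop (𝓝[≠] 0) :=
    tendsto_nhdsWithin_iff.2 ⟨tendsto_inv_atTop_nhds_zero_nat,
      (eventually_ne_atTop 0).mono fun N hN => by simpa using hN⟩
  refine ((hasDerivAt_iff_tendsto_slope.1 hderiv).comp hinv).congr fun N => ?_
  simp [slope_def_field, div_eq_mul_inv, mul_comm]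

theorem angle_le_mul_of_lipschitzOnWith {g : ℝ → V} {K : ℝ≥0} {s : Set ℝ} [s.OrdConnected]
    (hg : LipschitzOnWith K g s) (hunit : ∀ t ∈ s, ‖g t‖ = 1) {x y : ℝ} (hx : x ∈ s)
    (hy : y ∈ s) (hxy : x ≤ y) : angle (g x) (g y) ≤ K * (y - x) := by
  refine ge_of_tendsto (tendsto_nat_mul_two_mul_arcsin (K * (y - x))) ?_
  filter_upwards [eventually_ge_atTop 1] with N hN
  have hN' : (N : ℝ) ≠ 0 := by positivity
  rw [mul_div_assoc]
  exact angle_le_nat_mul_two_mul_arcsin_of_lipschitzOnWith hg hunit N hx hy hxy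
    (by rw [mul_div_cancel₀ _ hN'])

theorem inner_sq_add_inner_sq_le_norm_sq {u e : V} (hu : ‖u‖ = 1) (he : ‖e‖ = 1)
    (hue : ⟪u, e⟫ = 0) (x : V) : ⟪u, x⟫ ^ 2 + ⟪e, x⟫ ^ 2 ≤ ‖x‖ ^ 2 := by
  have hon : Orthonormal ℝ ![u, e] := by
    rw [orthonormal_iff_ite]
    intro i j
    fin_cases i <;> fin_cases j <;> simp [hu, he, hue, real_inner_comm]
  simpa [Fin.sum_univ_two] using hon.sum_inner_products_le x (s := Finset.univ)

structure UnitSpeedCurvLeOneOn (f fd : ℝ → V) (s : Set ℝ) : Prop where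
  hasDerivWithinAt : ∀ t ∈ s, HasDerivWithinAt f (fd t) s t
  norm_eq_one : ∀ t ∈ s, ‖fd t‖ = 1
  lipschitzOnWith : LipschitzOnWith 1 fd s

namespace UnitSpeedCurvLeOneOn

variable {f fd : ℝ → V} {s : Set ℝ}

theorem mono (hγ : UnitSpeedCurvLeOneOn f fd s) {t : Set ℝ} (hts : t ⊆ s) :
    UnitSpeedCurvLeOneOn f fd t where
  hasDerivWithinAt x hx := (hγ.hasDerivWithinAt x (hts hx)).mono hts
  norm_eq_one x hx := hγ.norm_eq_one x (hts hx)
  lipschitzOnWith := hγ.lipschitzOnWith.mono hts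

theorem comp_neg (hγ : UnitSpeedCurvLeOneOn f fd s) :
    UnitSpeedCurvLeOneOn (fun t => f (-t)) (fun t => -fd (-t)) (-s) where
  hasDerivWithinAt x hx :=
    ((hγ.hasDerivWithinAt (-x) hx).scomp x (hasDerivAt_neg x).hasDerivWithinAt
      (s := -s) fun y hy => hy).congr_deriv (neg_one_smul ℝ _)
  norm_eq_one x hx := by rw [norm_neg]; exact hγ.norm_eq_one (-x) hx
  lipschitzOnWith := by
    refine LipschitzOnWith.of_dist_le_mul fun x hx y hy => ?_
    rw [dist_neg_neg, ← dist_neg_neg x y]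
    exact hγ.lipschitzOnWith.dist_le_mul (-x) hx (-y) hy

theorem continuousOn (hγ : UnitSpeedCurvLeOneOn f fd s) : ContinuousOn f s :=
  fun t ht => (hγ.hasDerivWithinAt t ht).continuousWithinAt

theorem sin_add_sub_sin_le_inner_sub {a b : ℝ} (hγ : UnitSpeedCurvLeOneOn f fd (Icc a b))
    (hab : a ≤ b) {w : V} (hw : ‖w‖ = 1) (hπ : angle (fd a) w + (b - a) ≤ π) :
    sin (angle (fd a) w + (b - a)) - sin (angle (fd a) w) ≤ ⟪f b - f a, w⟫ := by
  set α := angle (fd a) w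
  have hmono : MonotoneOn (fun t => ⟪f t, w⟫ - sin (α + (t - a))) (Icc a b) := by
    refine monotoneOn_of_hasDerivWithinAt_nonneg (convex_Icc a b)
      (f' := fun t => ⟪fd t, w⟫ - cos (α + (t - a))) ?_ ?_ ?_
    · exact (hγ.continuousOn.inner continuousOn_const).sub (by fun_prop)
    · intro t ht
      have hf := (hγ.hasDerivWithinAt t (interior_subset ht)).mono interior_subset
      have hsin := ((hasDerivAt_id t).sub_const a).const_add α |>.sin.hasDerivWithinAt
        (s := interior (Icc a b))
      exact ((hf.inner ℝ (hasDerivWithinAt_const t _ w)).sub hsin).congr_deriv (by simp)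
    · intro t ht
      rw [interior_Icc] at ht
      have hta : angle (fd a) (fd t) ≤ t - a := by
        simpa using angle_le_mul_of_lipschitzOnWith hγ.lipschitzOnWith hγ.norm_eq_one
          (left_mem_Icc.2 hab) (Ioo_subset_Icc_self ht) ht.1.le
      have htw : angle (fd t) w ≤ α + (t - a) := by
        linarith [angle_le_angle_add_angle (fd t) (fd a) w, angle_comm (fd t) (fd a)]
      rw [sub_nonneg, inner_eq_cos_angle_of_norm_eq_one
        (hγ.norm_eq_one t (Ioo_subset_Icc_self ht)) hw]
      exact cos_le_cos_of_nonneg_of_le_pi (angle_nonneg _ _) (by linarith [ht.2]) htw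
  have := hmono (left_mem_Icc.2 hab) (right_mem_Icc.2 hab) hab
  simp only [sub_self, add_zero] at this
  rw [inner_sub_left]
  linarith

theorem one_lt_norm_right {a b : ℝ} (hγ : UnitSpeedCurvLeOneOn f fd (Icc a b)) (hab : a ≤ b)
    (hba : b - a ≤ π / 2) (hperp : ⟪f a, fd a⟫ = 0) (ha : 1 < ‖f a‖) : 1 < ‖f b‖ := by
  set T := b - a
  set m := ‖f a‖ with hm
  set u := m⁻¹ • f a
  set e := fd a
  have he : ‖e‖ = 1 := hγ.norm_eq_one a (left_mem_Icc.2 hab)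
  have hu : ‖u‖ = 1 := by
    rw [norm_smul, norm_inv, norm_norm, inv_mul_cancel₀ (by positivity)]
  have hue : ⟪u, e⟫ = 0 := by rw [real_inner_smul_left, hperp, mul_zero]
  have hfu : ⟪f a, u⟫ = m := by
    rw [real_inner_smul_right, real_inner_self_eq_norm_sq, ← hm, sq,
      inv_mul_cancel_left₀ (by positivity)]
  have hT : 0 ≤ T := sub_nonneg.2 hab
  have hsin : 0 ≤ sin T := sin_nonneg_of_nonneg_of_le_pi hT (by linarith [pi_pos])
  have hcos : 0 ≤ cos T := cos_nonneg_of_neg_pi_div_two_le_of_le (by linarith [pi_pos]) hba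
  -- Compare with the unit circle `t ↦ (m - 1 + cos t) • u + sin t • e`.
  have hfe : sin T ≤ ⟪f b, e⟫ := by
    have hα : angle e e = 0 := angle_self (norm_ne_zero_iff.1 (by rw [he]; exact one_ne_zero))
    have := hγ.sin_add_sub_sin_le_inner_sub hab he (by rw [hα]; linarith)
    rwa [hα, zero_add, sin_zero, sub_zero, inner_sub_left, hperp, sub_zero] at this
  have hfu' : m - 1 + cos T ≤ ⟪f b, u⟫ := by
    have hα : angle e u = π / 2 := (inner_eq_zero_iff_angle_eq_pi_div_two e u).1 (by
      rw [real_inner_comm, hue])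
    have := hγ.sin_add_sub_sin_le_inner_sub hab hu (by rw [hα]; linarith)
    rw [hα, sin_pi_div_two, add_comm, sin_add_pi_div_two, inner_sub_left, hfu] at this
    linarith
  have hbessel := inner_sq_add_inner_sq_le_norm_sq hu he hue (f b)
  rw [real_inner_comm] at hfe hfu'
  have h1 : 1 < ‖f b‖ ^ 2 := by nlinarith [sin_sq_add_cos_sq T]
  nlinarith [norm_nonneg (f b)]

theorem one_lt_norm_left {a b : ℝ} (hγ : UnitSpeedCurvLeOneOn f fd (Icc a b)) (hab : a ≤ b)
    (hba : b - a ≤ π / 2) (hperp : ⟪f b, fd b⟫ = 0) (hb : 1 < ‖f b‖) : 1 < ‖f a‖ := by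
  have := (neg_Icc a b ▸ hγ.comp_neg).one_lt_norm_right (neg_le_neg hab) (by linarith)
    (by simpa using hperp) (by simpa using hb)
  simpa using this

end UnitSpeedCurvLeOneOn

theorem inner_eq_zero_of_isLocalMax_norm {f : ℝ → V} {f' : V} {s : ℝ}
    (hmax : IsLocalMax (fun t => ‖f t‖) s) (hf : HasDerivAt f f' s) : ⟪f s, f'⟫ = 0 := by
  have hsq : IsLocalMax (‖f ·‖ ^ 2) s := by
    filter_upwards [hmax] with t ht using pow_le_pow_left₀ (norm_nonneg _) ht 2
  simpa using hsq.hasDerivAt_eq_zero hf.norm_sq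

theorem statement_10_general {n : ℕ} (L : ℝ) (f fd : ℝ → Euc n)
    (hderiv : ∀ s ∈ Set.Icc (0 : ℝ) L, HasDerivWithinAt f (fd s) (Set.Icc 0 L) s)
    (hunit : ∀ s ∈ Set.Icc (0 : ℝ) L, ‖fd s‖ = 1)
    (hlip : LipschitzOnWith 1 fd (Set.Icc 0 L))
    (h0 : ‖f 0‖ = 1) (hLend : ‖f L‖ = 1)
    (a : ℝ) (ha : a ∈ Set.Icc (0 : ℝ) L) (hout : 1 < ‖f a‖) :
    Real.pi < L := by
  have hγ : UnitSpeedCurvLeOneOn f fd (Icc 0 L) := ⟨hderiv, hunit, hlip⟩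
  obtain ⟨s, hs, hmax⟩ := isCompact_Icc.exists_isMaxOn ⟨a, ha⟩ hγ.continuousOn.norm
  have h1 : 1 < ‖f s‖ := hout.trans_le (hmax ha)
  have hsI : Icc 0 L ∈ 𝓝 s := Icc_mem_nhds (hs.1.lt_of_ne (by rintro rfl; linarith))
    (hs.2.lt_of_ne (by rintro rfl; linarith))
  have hperp : ⟪f s, fd s⟫ = 0 :=
    inner_eq_zero_of_isLocalMax_norm (hmax.isLocalMax hsI) ((hderiv s hs).hasDerivAt hsI)
  have hright : π / 2 < L - s := by
    by_contra! h
    exact ((hγ.mono (Icc_subset_Icc_left hs.1)).one_lt_norm_right hs.2 h hperp h1).ne' hLend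
  have hleft : π / 2 < s := by
    by_contra! h
    exact ((hγ.mono (Icc_subset_Icc_right hs.2)).one_lt_norm_left hs.1 (by simpa using h)
      hperp h1).ne' h0
  linarith

/-- If a unit-speed curve of curvature at most `1` starts and ends on the
unit sphere and exits the closed unit ball, then its length exceeds `π`. -/
theorem statement_10 {n : ℕ} (hn : 2 ≤ n) (L : ℝ) (hL : 0 ≤ L) (f fd : ℝ → Euc n)
    (hderiv : ∀ s ∈ Set.Icc (0 : ℝ) L, HasDerivWithinAt f (fd s) (Set.Icc 0 L) s)
    (hunit : ∀ s ∈ Set.Icc (0 : ℝ) L, ‖fd s‖ = 1)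
    (hlip : LipschitzOnWith 1 fd (Set.Icc 0 L))
    (h0 : ‖f 0‖ = 1) (hLend : ‖f L‖ = 1)
    (a : ℝ) (ha : a ∈ Set.Icc (0 : ℝ) L) (hout : 1 < ‖f a‖) :
    Real.pi < L :=
  statement_10_general L f fd hderiv hunit hlip h0 hLend a ha hout
end

section
/- Let n ≥ 2, let p,q ∈ ℝⁿ, let v,w ∈ ℝⁿ be unit vectors, and let Λ > 0. Then the class C(p,q;v,w;Λ) is nonempty and contains a curve of minimal length: there exists γ₀ ∈ C(p,q;v,w;Λ) such that the length of γ₀ is less than or equal to the length of γ for every γ ∈ C(p,q;v,w;Λ). -/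
open Set Filter MeasureTheory
open scoped RealInnerProductSpace Topology ENNReal

/-!
To get from `(p, v)` to `(q, w)`, first turn from `v` to `w` along a circular arc of radius
`1 / Λ` in the plane of `v` and `w` (any plane through `v` if `w = -v`). Any displacement can
then be realised with unchanged direction: a detour made of quarter and half circles and segments
moves by `(4 / Λ + m₁) • e - m₂ • h` for arbitrary `m₁, m₂ ≥ 0` and any unit `e ⊥ h`, and two
such detours plus a segment give every vector.

For the minimum, let `ℓ` be the infimal length and take curves whose lengths decrease to `ℓ`. Their
tangent fields restricted to `[0, ℓ]` are unit and `Λ`-Lipschitz, so by Arzelà–Ascoli a subsequence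
converges uniformly. The limit is again a unit `Λ`-Lipschitz field with the right end values, and
its integral is `q - p` because the discarded pieces of the curves have length tending to `0`.
Integrating it gives a curve of length `ℓ`.
-/

open scoped NNReal BoundedContinuousFunction Interval

theorem hasDerivWithinAt_Icc_of_Icc_of_Icc {E : Type*} [NormedAddCommGroup E] [NormedSpace ℝ E]
    {f f' : ℝ → E} {a b c : ℝ} (hab : a ≤ b) (hbc : b ≤ c)
    (h₁ : ∀ s ∈ Icc a b, HasDerivWithinAt f (f' s) (Icc a b) s)
    (h₂ : ∀ s ∈ Icc b c, HasDerivWithinAt f (f' s) (Icc b c) s) :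
    ∀ s ∈ Icc a c, HasDerivWithinAt f (f' s) (Icc a c) s := by
  have trivial_off : ∀ {s x y : ℝ}, s ∉ Icc x y → HasDerivWithinAt f (f' s) (Icc x y) s :=
    fun {s x y} hs => hasDerivWithinAt_iff_hasFDerivWithinAt.mpr
      (.of_notMem_closure (by rwa [closure_Icc x y]))
  rw [← Icc_union_Icc_eq_Icc hab hbc]
  intro s _
  refine HasDerivWithinAt.union ?_ ?_
  · by_cases hs : s ∈ Icc a b
    exacts [h₁ s hs, trivial_off hs]
  · by_cases hs : s ∈ Icc b c
    exacts [h₂ s hs, trivial_off hs]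

theorem LipschitzOnWith.Icc_union_Icc_s12 {α : Type*} [PseudoMetricSpace α] {f : ℝ → α} {K : ℝ≥0}
    {a b c : ℝ} (hab : a ≤ b) (hbc : b ≤ c) (h₁ : LipschitzOnWith K f (Icc a b))
    (h₂ : LipschitzOnWith K f (Icc b c)) : LipschitzOnWith K f (Icc a c) := by
  have key : ∀ x ∈ Icc a c, ∀ y ∈ Icc a c, x ≤ y → dist (f x) (f y) ≤ K * (y - x) := by
    intro x hx y hy hxy
    rcases le_total y b with hyb | hby
    · simpa [Real.dist_eq, abs_of_nonpos (sub_nonpos.2 hxy)] using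
        h₁.dist_le_mul x ⟨hx.1, hxy.trans hyb⟩ y ⟨hy.1, hyb⟩
    rcases le_total x b with hxb | hbx
    · calc dist (f x) (f y) ≤ dist (f x) (f b) + dist (f b) (f y) := dist_triangle _ _ _
        _ ≤ K * dist x b + K * dist b y :=
          add_le_add (h₁.dist_le_mul x ⟨hx.1, hxb⟩ b ⟨hab, le_rfl⟩)
            (h₂.dist_le_mul b ⟨le_rfl, hbc⟩ y ⟨hby, hy.2⟩)
        _ = K * (y - x) := by
          rw [Real.dist_eq, Real.dist_eq, abs_of_nonpos (sub_nonpos.2 hxb),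
            abs_of_nonpos (sub_nonpos.2 hby)]
          ring
    · simpa [Real.dist_eq, abs_of_nonpos (sub_nonpos.2 hxy)] using
        h₂.dist_le_mul x ⟨hbx, hxy.trans hy.2⟩ y ⟨hxy.trans' hbx, hy.2⟩
  refine LipschitzOnWith.of_dist_le_mul fun x hx y hy => ?_
  rcases le_total x y with hxy | hyx
  · simpa [Real.dist_eq, abs_of_nonpos (sub_nonpos.2 hxy)] using key x hx y hy hxy
  · simpa [Real.dist_eq, dist_comm, abs_of_nonneg (sub_nonneg.2 hyx)] using key y hy x hx hyx

theorem ite_le_eq_sub_of_le {E : Type*} {L s : ℝ} {g h : ℝ → E} (hgh : g L = h 0) (hs : L ≤ s) :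
    (if s ≤ L then g s else h (s - L)) = h (s - L) := by
  rcases hs.eq_or_lt with rfl | hs
  · simp [hgh]
  · simp [not_le.2 hs]

theorem norm_smul_add_smul_sq {E : Type*} [NormedAddCommGroup E] [InnerProductSpace ℝ E]
    {u e : E} (hu : ‖u‖ = 1) (he : ‖e‖ = 1) (hue : ⟪u, e⟫ = 0) (a b : ℝ) :
    ‖a • u + b • e‖ ^ 2 = a ^ 2 + b ^ 2 := by
  rw [norm_add_sq_real, norm_smul, norm_smul, real_inner_smul_left, real_inner_smul_right, hue]
  simp [hu, he, sq_abs]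

theorem norm_cos_smul_add_sin_smul {E : Type*} [NormedAddCommGroup E] [InnerProductSpace ℝ E]
    {u e : E} (hu : ‖u‖ = 1) (he : ‖e‖ = 1) (hue : ⟪u, e⟫ = 0) (θ : ℝ) :
    ‖Real.cos θ • u + Real.sin θ • e‖ = 1 := by
  have h := norm_smul_add_smul_sq hu he hue (Real.cos θ) (Real.sin θ)
  rwa [Real.cos_sq_add_sin_sq, pow_eq_one_iff_of_nonneg (norm_nonneg _) two_ne_zero] at h

theorem lipschitzWith_cos_smul_add_sin_smul {E : Type*} [NormedAddCommGroup E]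
    [InnerProductSpace ℝ E] {u e : E} (hu : ‖u‖ = 1) (he : ‖e‖ = 1) (hue : ⟪u, e⟫ = 0) :
    LipschitzWith 1 fun θ : ℝ => Real.cos θ • u + Real.sin θ • e := by
  have hderiv : ∀ θ : ℝ, HasDerivAt (fun θ : ℝ => Real.cos θ • u + Real.sin θ • e)
      (Real.cos (θ + Real.pi / 2) • u + Real.sin (θ + Real.pi / 2) • e) θ := fun θ => by
    rw [Real.cos_add_pi_div_two, Real.sin_add_pi_div_two]
    exact ((Real.hasDerivAt_cos θ).smul_const u).add ((Real.hasDerivAt_sin θ).smul_const e)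
  refine lipschitzWith_of_nnnorm_deriv_le (fun θ => (hderiv θ).differentiableAt) fun θ => ?_
  rw [(hderiv θ).deriv, ← NNReal.coe_le_coe, coe_nnnorm, norm_cos_smul_add_sin_smul hu he hue]
  rfl

theorem exists_norm_eq_one_inner_eq_zero {E : Type*} [NormedAddCommGroup E]
    [InnerProductSpace ℝ E] [FiniteDimensional ℝ E] (hE : 2 ≤ Module.finrank ℝ E) (v : E) :
    ∃ u : E, ‖u‖ = 1 ∧ ⟪u, v⟫ = 0 := by
  have hsum := Submodule.finrank_add_finrank_orthogonal (ℝ ∙ v)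
  have hspan : Module.finrank ℝ (ℝ ∙ v) ≤ 1 := by
    simpa using finrank_span_le_card ({v} : Set E)
  obtain ⟨⟨x, hx⟩, hx0⟩ := Module.finrank_pos_iff_exists_ne_zero.mp
    (show 0 < Module.finrank ℝ (ℝ ∙ v)ᗮ by omega)
  have hx0 : x ≠ 0 := by simpa using hx0
  refine ⟨‖x‖⁻¹ • x, by simp [norm_smul, hx0], ?_⟩
  rw [real_inner_smul_left, Submodule.mem_orthogonal_singleton_iff_inner_left.mp hx, mul_zero]

theorem exists_norm_eq_one_inner_eq_zero_eq_norm_smul {E : Type*} [NormedAddCommGroup E]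
    [InnerProductSpace ℝ E] [FiniteDimensional ℝ E] (hE : 2 ≤ Module.finrank ℝ E) {x v : E}
    (hxv : ⟪x, v⟫ = 0) : ∃ u : E, ‖u‖ = 1 ∧ ⟪u, v⟫ = 0 ∧ x = ‖x‖ • u := by
  rcases eq_or_ne x 0 with rfl | hx
  · obtain ⟨u, hu, huv⟩ := exists_norm_eq_one_inner_eq_zero hE v
    exact ⟨u, hu, huv, by simp⟩
  · refine ⟨‖x‖⁻¹ • x, by simp [norm_smul, hx], by simp [real_inner_smul_left, hxv], ?_⟩
    rw [smul_smul, mul_inv_cancel₀ (norm_ne_zero_iff.mpr hx), one_smul]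

theorem exists_subseq_tendstoUniformly_of_lipschitzWith {X E : Type*} [PseudoMetricSpace X]
    [CompactSpace X] [MetricSpace E] [ProperSpace E] {K : ℝ≥0} {g : ℕ → X → E}
    (hg : ∀ k, LipschitzWith K (g k)) {c : E} {R : ℝ} (hR : ∀ k x, g k x ∈ Metric.closedBall c R) :
    ∃ d : X → E, LipschitzWith K d ∧
      ∃ φ : ℕ → ℕ, StrictMono φ ∧ TendstoUniformly (fun k => g (φ k)) d atTop := by
  set A : Set (X →ᵇ E) := {f | LipschitzWith K f ∧ ∀ x, f x ∈ Metric.closedBall c R}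
  have hlip : IsClosed {f : X →ᵇ E | LipschitzWith K f} :=
    (isClosed_setOfPred_lipschitzWith (α := X) (β := E) K).preimage
      BoundedContinuousFunction.continuous_coe
  have hball : IsClosed {f : X →ᵇ E | ∀ x, f x ∈ Metric.closedBall c R} := by
    simp only [Set.ofPred_forall]
    exact isClosed_iInter fun x =>
      Metric.isClosed_closedBall.preimage (continuous_eval_const x)
  have hA : IsCompact A :=
    BoundedContinuousFunction.arzela_ascoli₂ _ (isCompact_closedBall c R) A (hlip.inter hball)
      (fun f x hf => hf.2 x) (LipschitzWith.uniformEquicontinuous _ K fun f => f.2.1).equicontinuous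
  obtain ⟨d, hdA, φ, hφ, hlim⟩ := hA.tendsto_subseq (x := fun k =>
    BoundedContinuousFunction.mkOfCompact ⟨g k, (hg k).continuous⟩) fun k => ⟨hg k, hR k⟩
  exact ⟨d, hdA.1, φ, hφ, BoundedContinuousFunction.tendsto_iff_tendstoUniformly.mp hlim⟩

namespace CurveCC

section Constructions

variable {n : ℕ} {Λ : ℝ}

def copy {p q v w : Euc n} (γ : CurveCC n p q v w Λ) {q' w' : Euc n} (hq : q = q') (hw : w = w') :
    CurveCC n p q' v w' Λ :=
  ⟨γ.L, γ.Lnn, γ.f, γ.fd, γ.deriv, γ.unit, γ.lip, γ.i0, γ.id0, hq ▸ γ.iL, hw ▸ γ.idL⟩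

def segment (p : Euc n) {v : Euc n} (hv : ‖v‖ = 1) {t : ℝ} (ht : 0 ≤ t) :
    CurveCC n p (p + t • v) v v Λ where
  L := t
  Lnn := ht
  f s := p + s • v
  fd _ := v
  deriv s _ := by simpa using (((hasDerivAt_id s).smul_const v).const_add p).hasDerivWithinAt
  unit _ _ := hv
  lip := (LipschitzWith.const' v).lipschitzOnWith.weaken zero_le
  i0 := by simp
  id0 := rfl
  iL := rfl
  idL := rfl

theorem hasDerivAt_arc (hΛ : 0 < Λ) (p u e : Euc n) (s : ℝ) :
    HasDerivAt (fun s => p + Λ⁻¹ • (Real.sin (Λ * s) • u + (1 - Real.cos (Λ * s)) • e))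
      (Real.cos (Λ * s) • u + Real.sin (Λ * s) • e) s := by
  have hlin : HasDerivAt (fun s => Λ * s) Λ s := by simpa using (hasDerivAt_id s).const_mul Λ
  have h := ((((Real.hasDerivAt_sin _).comp s hlin).smul_const u).add
    ((((Real.hasDerivAt_cos _).comp s hlin).const_sub 1).smul_const e)).const_smul Λ⁻¹
      |>.const_add p
  refine h.congr_deriv ?_
  rw [smul_add, smul_smul, smul_smul, neg_mul, neg_neg]
  congr 2 <;> field_simp

noncomputable def arc (hΛ : 0 < Λ) (p : Euc n) {u e : Euc n} (hu : ‖u‖ = 1) (he : ‖e‖ = 1)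
    (hue : ⟪u, e⟫ = 0) {θ : ℝ} (hθ : 0 ≤ θ) :
    CurveCC n p (p + Λ⁻¹ • (Real.sin θ • u + (1 - Real.cos θ) • e)) u
      (Real.cos θ • u + Real.sin θ • e) Λ where
  L := θ / Λ
  Lnn := div_nonneg hθ hΛ.le
  f s := p + Λ⁻¹ • (Real.sin (Λ * s) • u + (1 - Real.cos (Λ * s)) • e)
  fd s := Real.cos (Λ * s) • u + Real.sin (Λ * s) • e
  deriv s _ := (hasDerivAt_arc hΛ p u e s).hasDerivWithinAt
  unit s _ := norm_cos_smul_add_sin_smul hu he hue _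
  lip := by
    have h := (lipschitzWith_cos_smul_add_sin_smul hu he hue).comp (lipschitzWith_smul Λ)
    refine (h.weaken (le_of_eq ?_)).lipschitzOnWith
    ext
    simp [hΛ.le]
  i0 := by simp
  id0 := by simp
  iL := by rw [mul_div_cancel₀ θ hΛ.ne']
  idL := by rw [mul_div_cancel₀ θ hΛ.ne']

noncomputable def quarterArc (hΛ : 0 < Λ) (p : Euc n) {u e : Euc n} (hu : ‖u‖ = 1)
    (he : ‖e‖ = 1) (hue : ⟪u, e⟫ = 0) : CurveCC n p (p + Λ⁻¹ • (u + e)) u e Λ :=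
  (arc hΛ p hu he hue (by positivity : 0 ≤ Real.pi / 2)).copy (by simp) (by simp)

noncomputable def halfArc (hΛ : 0 < Λ) (p : Euc n) {u e : Euc n} (hu : ‖u‖ = 1)
    (he : ‖e‖ = 1) (hue : ⟪u, e⟫ = 0) : CurveCC n p (p + (2 * Λ⁻¹) • e) u (-u) Λ :=
  (arc hΛ p hu he hue Real.pi_pos.le).copy (by simp only [Real.sin_pi, Real.cos_pi]; module)
    (by simp)

noncomputable def trans {p q r v u w : Euc n} (γ₁ : CurveCC n p r v u Λ)
    (γ₂ : CurveCC n r q u w Λ) :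
    CurveCC n p q v w Λ where
  L := γ₁.L + γ₂.L
  Lnn := add_nonneg γ₁.Lnn γ₂.Lnn
  f s := if s ≤ γ₁.L then γ₁.f s else γ₂.f (s - γ₁.L)
  fd s := if s ≤ γ₁.L then γ₁.fd s else γ₂.fd (s - γ₁.L)
  deriv := by
    refine hasDerivWithinAt_Icc_of_Icc_of_Icc γ₁.Lnn (le_add_of_nonneg_right γ₂.Lnn)
      (fun s hs => ?_) (fun s hs => ?_)
    · rw [if_pos hs.2]
      exact (γ₁.deriv s hs).congr (fun t ht => if_pos ht.2) (if_pos hs.2)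
    · have hshift : MapsTo (· - γ₁.L) (Icc γ₁.L (γ₁.L + γ₂.L)) (Icc 0 γ₂.L) :=
        fun t ht => ⟨sub_nonneg.2 ht.1, by linarith [ht.2]⟩
      have h := (γ₂.deriv _ (hshift hs)).scomp s
        ((hasDerivAt_id s).sub_const γ₁.L).hasDerivWithinAt hshift
      rw [one_smul] at h
      rw [ite_le_eq_sub_of_le (γ₁.idL.trans γ₂.id0.symm) hs.1]
      exact h.congr (fun t ht => ite_le_eq_sub_of_le (γ₁.iL.trans γ₂.i0.symm) ht.1)
        (ite_le_eq_sub_of_le (γ₁.iL.trans γ₂.i0.symm) hs.1)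
  unit s hs := by
    by_cases h : s ≤ γ₁.L
    · rw [if_pos h]
      exact γ₁.unit s ⟨hs.1, h⟩
    · rw [if_neg h]
      exact γ₂.unit _ ⟨by linarith, by linarith [hs.2]⟩
  lip := by
    refine LipschitzOnWith.Icc_union_Icc_s12 γ₁.Lnn (le_add_of_nonneg_right γ₂.Lnn)
      (LipschitzOnWith.of_dist_le_mul fun x hx y hy => ?_)
      (LipschitzOnWith.of_dist_le_mul fun x hx y hy => ?_)
    · simp only [if_pos hx.2, if_pos hy.2]
      exact γ₁.lip.dist_le_mul x hx y hy
    · simp only [ite_le_eq_sub_of_le (γ₁.idL.trans γ₂.id0.symm) hx.1,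
        ite_le_eq_sub_of_le (γ₁.idL.trans γ₂.id0.symm) hy.1]
      rw [← dist_sub_right x y γ₁.L]
      exact γ₂.lip.dist_le_mul _ ⟨sub_nonneg.2 hx.1, by linarith [hx.2]⟩
        _ ⟨sub_nonneg.2 hy.1, by linarith [hy.2]⟩
  i0 := by simp [γ₁.Lnn, γ₁.i0]
  id0 := by simp [γ₁.Lnn, γ₁.id0]
  iL := by
    rw [ite_le_eq_sub_of_le (γ₁.iL.trans γ₂.i0.symm) (le_add_of_nonneg_right γ₂.Lnn),
      add_sub_cancel_left, γ₂.iL]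
  idL := by
    rw [ite_le_eq_sub_of_le (γ₁.idL.trans γ₂.id0.symm) (le_add_of_nonneg_right γ₂.Lnn),
      add_sub_cancel_left, γ₂.idL]

theorem exists_turn (hΛ : 0 < Λ) (hn : 2 ≤ n) (p : Euc n) {v w : Euc n} (hv : ‖v‖ = 1)
    (hw : ‖w‖ = 1) : ∃ p' : Euc n, Nonempty (CurveCC n p p' v w Λ) := by
  set c := ⟪w, v⟫
  have hx : ⟪w - c • v, v⟫ = 0 := by
    rw [inner_sub_left, real_inner_smul_left, real_inner_self_eq_norm_sq, hv]; ring
  obtain ⟨u, hu, huv, hxu⟩ :=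
    exists_norm_eq_one_inner_eq_zero_eq_norm_smul (by simpa using hn) hx
  have hnorm : ‖w - c • v‖ ^ 2 = 1 - c ^ 2 := by
    rw [norm_sub_sq_real, real_inner_smul_right, norm_smul, hv, hw, Real.norm_eq_abs, mul_one,
      sq_abs]
    ring
  have hc : |c| ≤ 1 := by simpa [hv, hw] using abs_real_inner_le_norm w v
  have hcos : Real.cos (Real.arccos c) = c := Real.cos_arccos (abs_le.mp hc).1 (abs_le.mp hc).2
  have hsin : Real.sin (Real.arccos c) = ‖w - c • v‖ := by
    rw [Real.sin_arccos, ← hnorm, Real.sqrt_sq (norm_nonneg _)]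
  refine ⟨_, ⟨(arc hΛ p hv hu (by rwa [real_inner_comm]) (Real.arccos_nonneg c)).copy rfl ?_⟩⟩
  rw [hcos, hsin, ← hxu, add_sub_cancel]

theorem nonempty_detour (hΛ : 0 < Λ) (p : Euc n) {h e : Euc n} (hh : ‖h‖ = 1) (he : ‖e‖ = 1)
    (hhe : ⟪h, e⟫ = 0) {m₁ m₂ : ℝ} (hm₁ : 0 ≤ m₁) (hm₂ : 0 ≤ m₂) :
    Nonempty (CurveCC n p (p + ((4 * Λ⁻¹ + m₁) • e - m₂ • h)) h h Λ) := by
  have hnh : ‖-h‖ = 1 := by rwa [norm_neg]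
  have heh : ⟪e, -h⟫ = 0 := by rw [inner_neg_right, real_inner_comm, hhe, neg_zero]
  have hhe' : ⟪-h, e⟫ = 0 := by rw [inner_neg_left, hhe, neg_zero]
  exact ⟨((((quarterArc hΛ p hh he hhe).trans (segment _ he hm₁)).trans
    (quarterArc hΛ _ he hnh heh)).trans (segment _ hnh hm₂)).trans
    (halfArc hΛ _ hnh he hhe') |>.copy (by module) (neg_neg h)⟩

theorem nonempty_same_dir (hΛ : 0 < Λ) (hn : 2 ≤ n) (p c : Euc n) {h : Euc n}
    (hh : ‖h‖ = 1) : Nonempty (CurveCC n p (p + c) h h Λ) := by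
  set α := ⟪c, h⟫
  have hx : ⟪c - α • h, h⟫ = 0 := by
    rw [inner_sub_left, real_inner_smul_left, real_inner_self_eq_norm_sq, hh]; ring
  obtain ⟨e, he, heh, hxe⟩ :=
    exists_norm_eq_one_inner_eq_zero_eq_norm_smul (by simpa using hn) hx
  have hne : ‖-e‖ = 1 := by rwa [norm_neg]
  have hhe : ⟪h, e⟫ = 0 := by rwa [real_inner_comm]
  have hhne : ⟪h, -e⟫ = 0 := by rw [inner_neg_right, hhe, neg_zero]
  obtain ⟨γ₁⟩ := nonempty_detour hΛ p hh hne hhne le_rfl le_rfl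
  obtain ⟨γ₂⟩ := nonempty_detour hΛ _ hh he hhe (norm_nonneg (c - α • h)) (negPart_nonneg α)
  refine ⟨((γ₁.trans γ₂).trans (segment _ hh (posPart_nonneg α))).copy ?_ rfl⟩
  generalize ‖c - α • h‖ = r at hxe ⊢
  rw [← posPart_sub_negPart α] at hxe
  linear_combination (norm := module) -hxe

theorem nonempty (hΛ : 0 < Λ) (hn : 2 ≤ n) {p q v w : Euc n} (hv : ‖v‖ = 1) (hw : ‖w‖ = 1) :
    Nonempty (CurveCC n p q v w Λ) := by
  obtain ⟨p', ⟨γ₁⟩⟩ := exists_turn hΛ hn p hv hw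
  obtain ⟨γ₂⟩ := nonempty_same_dir hΛ hn p' (q - p') hw
  exact ⟨γ₁.trans (γ₂.copy (add_sub_cancel p' q) rfl)⟩

end Constructions

section Limits

variable {n : ℕ} {Λ : ℝ} {p q v w : Euc n}

noncomputable def ofTangent {ℓ : ℝ} (hℓ : 0 ≤ ℓ) (d : ℝ → Euc n) (hd : LipschitzWith Λ.toNNReal d)
    (hunit : ∀ s ∈ Icc 0 ℓ, ‖d s‖ = 1) (h0 : d 0 = v) (hℓd : d ℓ = w)
    (hint : ∫ t in 0..ℓ, d t = q - p) : CurveCC n p q v w Λ where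
  L := ℓ
  Lnn := hℓ
  f s := p + ∫ t in 0..s, d t
  fd := d
  deriv s _ :=
    ((hd.continuous.integral_hasStrictDerivAt 0 s).hasDerivAt.const_add p).hasDerivWithinAt
  unit := hunit
  lip := hd.lipschitzOnWith
  i0 := by simp
  id0 := h0
  iL := by simp [hint]
  idL := hℓd

theorem integral_fd (γ : CurveCC n p q v w Λ) : ∫ t in 0..γ.L, γ.fd t = q - p := by
  rw [intervalIntegral.integral_eq_sub_of_hasDeriv_right_of_le γ.Lnn
    (fun s hs => (γ.deriv s hs).continuousWithinAt) (fun s hs => ?_)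
    (γ.lip.continuousOn.intervalIntegrable_of_Icc γ.Lnn), γ.iL, γ.i0]
  exact (γ.deriv s (Ioo_subset_Icc_self hs)).mono_of_mem_nhdsWithin
    (mem_nhdsWithin_of_mem_nhds (Icc_mem_nhds hs.1 hs.2))

theorem norm_integral_fd_sub_le (γ : CurveCC n p q v w Λ) {ℓ : ℝ} (hℓ : 0 ≤ ℓ)
    (hℓL : ℓ ≤ γ.L) : ‖(∫ t in 0..ℓ, γ.fd t) - (q - p)‖ ≤ γ.L - ℓ := by
  have hint : ∀ a b, a ∈ Icc 0 γ.L → b ∈ Icc 0 γ.L → IntervalIntegrable γ.fd volume a b :=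
    fun a b ha hb => (γ.lip.continuousOn.mono (uIcc_subset_Icc ha hb)).intervalIntegrable
  rw [← γ.integral_fd, ← intervalIntegral.integral_add_adjacent_intervals
    (hint 0 ℓ ⟨le_rfl, γ.Lnn⟩ ⟨hℓ, hℓL⟩) (hint ℓ γ.L ⟨hℓ, hℓL⟩ ⟨γ.Lnn, le_rfl⟩),
    sub_add_cancel_left, norm_neg]
  refine (intervalIntegral.norm_integral_le_of_norm_le_const (C := 1) fun s hs => ?_).trans_eq ?_
  · rw [uIoc_of_le hℓL] at hs
    exact (γ.unit s ⟨hℓ.trans hs.1.le, hs.2⟩).le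
  · rw [one_mul, abs_of_nonneg (sub_nonneg.mpr hℓL)]

theorem dist_fd_le (γ : CurveCC n p q v w Λ) {ℓ : ℝ} (hℓ : 0 ≤ ℓ) (hℓL : ℓ ≤ γ.L) :
    dist (γ.fd ℓ) w ≤ Λ.toNNReal * (γ.L - ℓ) := by
  have h := γ.lip.dist_le_mul ℓ ⟨hℓ, hℓL⟩ γ.L ⟨γ.Lnn, le_rfl⟩
  rwa [γ.idL, Real.dist_eq, abs_sub_comm, abs_of_nonneg (sub_nonneg.mpr hℓL)] at h

theorem exists_length_eq_of_tendsto (Γ : ℕ → CurveCC n p q v w Λ) {ℓ : ℝ}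
    (hℓL : ∀ k, ℓ ≤ (Γ k).L) (hL : Tendsto (fun k => (Γ k).L) atTop (𝓝 ℓ)) :
    ∃ γ : CurveCC n p q v w Λ, γ.L = ℓ := by
  have hℓ : 0 ≤ ℓ := ge_of_tendsto' hL fun k => (Γ k).Lnn
  have hsub : ∀ k, Icc 0 ℓ ⊆ Icc 0 (Γ k).L := fun k => Icc_subset_Icc_right (hℓL k)
  obtain ⟨d, hd, φ, hφ, hlim⟩ := exists_subseq_tendstoUniformly_of_lipschitzWith
    (g := fun k (s : Icc 0 ℓ) => (Γ k).fd s) (fun k => ((Γ k).lip.mono (hsub k)).to_restrict)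
    (c := 0) (R := 1) fun k s => by
      simp [(Γ k).unit s (hsub k s.2)]
  set dd := IccExtend hℓ d
  have hdd : TendstoUniformlyOn (fun k => (Γ (φ k)).fd) dd atTop [[0, ℓ]] := by
    rw [← funext (IccExtend_val hℓ d)] at hlim
    rwa [uIcc_of_le hℓ, tendstoUniformlyOn_iff_restrict]
  have hpt : ∀ s ∈ Icc 0 ℓ, Tendsto (fun k => (Γ (φ k)).fd s) atTop (𝓝 (dd s)) := fun s hs =>
    hdd.tendsto_at (by rwa [uIcc_of_le hℓ])
  have hgap : Tendsto (fun k => (Γ (φ k)).L - ℓ) atTop (𝓝 0) := by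
    simpa using (hL.comp hφ.tendsto_atTop).sub_const ℓ
  have hdd_lip : LipschitzWith Λ.toNNReal dd := by
    have h := hd.comp (LipschitzWith.projIcc hℓ)
    rwa [mul_one] at h
  refine ⟨ofTangent hℓ dd hdd_lip (fun s hs => ?_) ?_ ?_ ?_, rfl⟩
  · refine tendsto_nhds_unique (hpt s hs).norm ?_
    simp only [(Γ (φ _)).unit s (hsub _ hs), tendsto_const_nhds]
  · refine tendsto_nhds_unique (hpt 0 ⟨le_rfl, hℓ⟩) ?_
    simp only [(Γ (φ _)).id0, tendsto_const_nhds]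
  · refine tendsto_nhds_unique (hpt ℓ ⟨hℓ, le_rfl⟩) ?_
    refine tendsto_iff_dist_tendsto_zero.mpr (squeeze_zero (fun _ => dist_nonneg)
      (fun k => (Γ (φ k)).dist_fd_le hℓ (hℓL _)) ?_)
    simpa using hgap.const_mul (Λ.toNNReal : ℝ)
  · refine tendsto_nhds_unique (hdd.tendsto_intervalIntegral_of_continuousOn
      (.of_forall fun k => ?_)) ?_
    · exact (Γ (φ k)).lip.continuousOn.mono (uIcc_of_le hℓ ▸ hsub _)
    · exact tendsto_iff_norm_sub_tendsto_zero.mpr (squeeze_zero (fun _ => norm_nonneg _)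
        (fun k => (Γ (φ k)).norm_integral_fd_sub_le hℓ (hℓL _)) hgap)

end Limits

end CurveCC

/-- The class `C(p,q;v,w;Λ)` is nonempty and contains a curve of minimal
length. -/
theorem statement_12 {n : ℕ} (hn : 2 ≤ n) (p q v w : Euc n)
    (hv : ‖v‖ = 1) (hw : ‖w‖ = 1) (Λ : ℝ) (hΛ : 0 < Λ) :
    ∃ γ₀ : CurveCC n p q v w Λ, ∀ γ : CurveCC n p q v w Λ, γ₀.L ≤ γ.L := by
  obtain ⟨γ⟩ := CurveCC.nonempty (p := p) (q := q) hΛ hn hv hw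
  set S := range (CurveCC.L : CurveCC n p q v w Λ → ℝ)
  have hS : BddBelow S := ⟨0, by rintro _ ⟨γ, rfl⟩; exact γ.Lnn⟩
  obtain ⟨u, -, hu, huS⟩ := exists_seq_tendsto_sInf (S := S) ⟨γ.L, γ, rfl⟩ hS
  choose Γ hΓ using huS
  obtain ⟨γ₀, hγ₀⟩ := CurveCC.exists_length_eq_of_tendsto Γ
    (fun k => csInf_le hS ⟨Γ k, rfl⟩) (by simpa only [hΓ] using hu)
  exact ⟨γ₀, fun γ => hγ₀ ▸ csInf_le hS ⟨γ, rfl⟩⟩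
end

section
/- Let γ_m, γ₀ : ℝ/Lℤ → ℝⁿ (n ≥ 2) be C¹ closed curves with nowhere-vanishing derivative such that γ_m → γ₀ and γ_m' → γ₀' uniformly on ℝ/Lℤ, and set K_m = γ_m(ℝ/Lℤ), K₀ = γ₀(ℝ/Lℤ). If r > 0 and R_O(K_m) ≥ r for all sufficiently large m, then R_O(K₀) ≥ r. Consequently, limsup_m R_O(K_m) ≤ R_O(K₀). -/
open Set Filter MeasureTheory
open scoped RealInnerProductSpace Topology ENNReal

/-!
If a ball of radius `r` tangent to `K₀` at `γ₀(s)` contains `γ₀(t)` in its interior, then tilting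
its direction slightly to make it normal to `γ_m'(s)` gives a ball of the same radius tangent to
`K_m` at `γ_m(s)` which still contains `γ_m(t)` for large `m`. Hence `R_O(K_m) ≤ r` eventually, and
taking the infimum over such `r` gives both claims. This needs at least one such `r` to exist
(otherwise `R_O(K₀)` is the junk value `sInf ∅ = 0`): at a minimum `s` of the height function
`⟪γ₀'(0), γ₀⟫`, the direction `γ₀'(0)` is normal and points towards `γ₀(0)`, which then lies in
every large enough ball tangent at `γ₀(s)` in that direction.
-/

section InnerProductSpace

variable {E : Type*} [NormedAddCommGroup E] [InnerProductSpace ℝ E]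

theorem norm_sub_smul_lt_iff {d w : E} (hw : ‖w‖ = 1) {r : ℝ} (hr : 0 < r) :
    ‖d - r • w‖ < r ↔ ‖d‖ ^ 2 < 2 * r * ⟪d, w⟫ := by
  have hsq : ‖d - r • w‖ ^ 2 = ‖d‖ ^ 2 - 2 * r * ⟪d, w⟫ + r ^ 2 := by
    rw [norm_sub_sq_real, real_inner_smul_right, norm_smul, Real.norm_of_nonneg hr.le, hw]
    ring
  rw [← pow_lt_pow_iff_left₀ (norm_nonneg _) hr.le two_ne_zero, hsq]
  constructor <;> intro h <;> linarith

theorem exists_norm_sub_smul_lt {d w : E} (hw : ‖w‖ = 1) (hdw : 0 < ⟪d, w⟫) :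
    ∃ r > 0, ‖d - r • w‖ < r := by
  have hr : 0 < ‖d‖ ^ 2 / ⟪d, w⟫ + 1 := by positivity
  refine ⟨_, hr, (norm_sub_smul_lt_iff hw hr).2 ?_⟩
  have h : 2 * (‖d‖ ^ 2 / ⟪d, w⟫ + 1) * ⟪d, w⟫ = 2 * ‖d‖ ^ 2 + 2 * ⟪d, w⟫ := by
    field_simp
  rw [h]
  linarith [sq_nonneg ‖d‖]

theorem Function.Periodic.exists_inner_deriv_eq_zero_inner_sub_pos {f f' : ℝ → E} {c : ℝ}
    (hp : Function.Periodic f c) (hc : c ≠ 0) (hf : ∀ s, HasDerivAt f (f' s) s)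
    (hf'0 : f' 0 ≠ 0) : ∃ s, ⟪f' 0, f' s⟫ = 0 ∧ 0 < ⟪f 0 - f s, f' 0⟫ := by
  set φ : ℝ → ℝ := fun s => ⟪f' 0, f s⟫
  have hφ : ∀ s, HasDerivAt φ ⟪f' 0, f' s⟫ s := fun s => by
    simpa using (hasDerivAt_const s (f' 0)).inner ℝ (hf s)
  have hφp : Function.Periodic φ c := fun s => by simp only [φ, hp s]
  have hφc : Continuous φ := continuous_iff_continuousAt.2 fun s => (hφ s).continuousAt
  obtain ⟨_, ⟨s, rfl⟩, hmin⟩ :=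
    (hφp.compact_of_continuous hc hφc).exists_isLeast (range_nonempty φ)
  have hmin' : ∀ t, φ s ≤ φ t := fun t => hmin ⟨t, rfl⟩
  have hcrit : ⟪f' 0, f' s⟫ = 0 :=
    IsLocalMin.hasDerivAt_eq_zero (Eventually.of_forall hmin') (hφ s)
  have hlt : φ s < φ 0 := by
    by_contra! h
    have h0 : IsLocalMin φ 0 := Eventually.of_forall fun t => h.trans (hmin' t)
    exact hf'0 (inner_self_eq_zero.1 (h0.hasDerivAt_eq_zero (hφ 0)))
  refine ⟨s, hcrit, ?_⟩
  rw [real_inner_comm, inner_sub_right]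
  exact sub_pos.2 hlt

theorem exists_tendsto_unit_orthogonal {ι : Type*} {l : Filter ι} {V : ι → E} {v w : E}
    (hV : Tendsto V l (𝓝 v)) (hv : v ≠ 0) (hw : ‖w‖ = 1) (hwv : ⟪w, v⟫ = 0) :
    ∃ W : ι → E, Tendsto W l (𝓝 w) ∧ ∀ᶠ m in l, ‖W m‖ = 1 ∧ ⟪W m, V m⟫ = 0 := by
  set g : E → E := fun u => w - (⟪w, u⟫ / ‖u‖ ^ 2) • u
  have hg_orth : ∀ u, ⟪g u, u⟫ = 0 := by
    intro u
    rcases eq_or_ne u 0 with rfl | hu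
    · exact inner_zero_right _
    have hu' : ‖u‖ ^ 2 ≠ 0 := by positivity
    simp only [g, inner_sub_left, real_inner_smul_left, real_inner_self_eq_norm_sq,
      div_mul_cancel₀ _ hu', sub_self]
  have hgv : g v = w := by simp only [g, hwv, zero_div, zero_smul, sub_zero]
  have hg : ContinuousAt g v := by
    have : ‖v‖ ^ 2 ≠ 0 := by positivity
    fun_prop (disch := assumption)
  have hgV : Tendsto (fun m => g (V m)) l (𝓝 w) := hgv ▸ hg.tendsto.comp hV
  refine ⟨fun m => ‖g (V m)‖⁻¹ • g (V m), ?_, ?_⟩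
  · simpa [hw] using (hgV.norm.inv₀ (by simp [hw])).smul hgV
  · filter_upwards [hgV.eventually_ne (norm_ne_zero_iff.1 (hw ▸ one_ne_zero))] with m hm
    exact ⟨norm_smul_inv_norm hm, by rw [real_inner_smul_left, hg_orth, mul_zero]⟩

end InnerProductSpace

section BallRadius

variable {n : ℕ}

def ROset (f γd : ℝ → Euc n) (D : Set ℝ) : Set ℝ :=
  {r : ℝ | 0 < r ∧ ∃ s ∈ D, ∃ t ∈ D, ∃ w : Euc n,
    ‖w‖ = 1 ∧ ⟪w, γd s⟫ = 0 ∧ ‖f t - f s - r • w‖ < r}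

theorem RO_eq_sInf_ROset (f γd : ℝ → Euc n) (D : Set ℝ) : RO f γd D = sInf (ROset f γd D) :=
  rfl

theorem RO_nonneg (f γd : ℝ → Euc n) (D : Set ℝ) : 0 ≤ RO f γd D :=
  Real.sInf_nonneg fun _ hr => hr.1.le

theorem RO_le_of_mem_ROset {f γd : ℝ → Euc n} {D : Set ℝ} {r : ℝ} (hr : r ∈ ROset f γd D) :
    RO f γd D ≤ r :=
  csInf_le ⟨0, fun _ hx => hx.1.le⟩ hr

theorem ClosedC1.ROset_nonempty {L : ℝ} (hL : L ≠ 0) (c : ClosedC1 n L) :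
    (ROset c.f c.fd univ).Nonempty := by
  obtain ⟨s, hcrit, hpos⟩ :=
    Function.Periodic.exists_inner_deriv_eq_zero_inner_sub_pos c.per hL c.deriv (c.nz 0)
  set w : Euc n := ‖c.fd 0‖⁻¹ • c.fd 0
  have hw : ‖w‖ = 1 := norm_smul_inv_norm (c.nz 0)
  have hws : ⟪w, c.fd s⟫ = 0 := by rw [real_inner_smul_left, hcrit, mul_zero]
  have hdw : 0 < ⟪c.f 0 - c.f s, w⟫ := by
    rw [real_inner_smul_right]
    exact mul_pos (inv_pos.2 (norm_pos_iff.2 (c.nz 0))) hpos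
  obtain ⟨r, hr, hball⟩ := exists_norm_sub_smul_lt hw hdw
  exact ⟨r, hr, s, trivial, 0, trivial, w, hw, hws, hball⟩

theorem eventually_mem_ROset {ι : Type*} {l : Filter ι} {f fd : ι → ℝ → Euc n}
    {f₀ fd₀ : ℝ → Euc n} {D : Set ℝ} (hf : ∀ s, Tendsto (fun m => f m s) l (𝓝 (f₀ s)))
    (hfd : ∀ s, Tendsto (fun m => fd m s) l (𝓝 (fd₀ s))) (hfd₀ : ∀ s, fd₀ s ≠ 0) {r : ℝ}
    (hr : r ∈ ROset f₀ fd₀ D) : ∀ᶠ m in l, r ∈ ROset (f m) (fd m) D := by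
  obtain ⟨hr, s, hs, t, ht, w, hw, hws, hball⟩ := hr
  obtain ⟨W, hW, hWunit⟩ := exists_tendsto_unit_orthogonal (hfd s) (hfd₀ s) hw hws
  have hballs : Tendsto (fun m => ‖f m t - f m s - r • W m‖) l (𝓝 ‖f₀ t - f₀ s - r • w‖) :=
    (((hf t).sub (hf s)).sub (hW.const_smul r)).norm
  filter_upwards [hWunit, hballs.eventually_lt_const hball] with m ⟨hWm, hWs⟩ hm
  exact ⟨hr, s, hs, t, ht, W m, hWm, hWs, hm⟩

end BallRadius

theorem statement_14_general {n : ℕ} (L : ℝ) (hL : 0 < L)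
    (γ : ℕ → ClosedC1 n L) (γ₀ : ClosedC1 n L)
    (hconv : TendstoUniformly (fun m => (γ m).f) γ₀.f atTop)
    (hconvd : TendstoUniformly (fun m => (γ m).fd) γ₀.fd atTop) :
    (∀ r : ℝ, 0 < r → (∀ᶠ m in atTop, r ≤ RO (γ m).f (γ m).fd Set.univ) →
      r ≤ RO γ₀.f γ₀.fd Set.univ) ∧
    atTop.limsup (fun m => RO (γ m).f (γ m).fd Set.univ) ≤ RO γ₀.f γ₀.fd Set.univ := by
  have hne := γ₀.ROset_nonempty hL.ne'
  have hRO_le : ∀ r ∈ ROset γ₀.f γ₀.fd univ, ∀ᶠ m in atTop, RO (γ m).f (γ m).fd univ ≤ r :=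
    fun r hr => (eventually_mem_ROset hconv.tendsto_at hconvd.tendsto_at γ₀.nz hr).mono
      fun _ => RO_le_of_mem_ROset
  rw [RO_eq_sInf_ROset]
  refine ⟨fun r _ hev => le_csInf hne fun r' hr' => ?_, le_csInf hne fun r' hr' => ?_⟩
  · obtain ⟨m, hrm, hmr'⟩ := (hev.and (hRO_le r' hr')).exists
    exact hrm.trans hmr'
  · exact limsup_le_of_le (isCoboundedUnder_le_of_le atTop fun _ => RO_nonneg _ _ _)
      (hRO_le r' hr')

/-- The ball radius is upper semicontinuous under `C¹` convergence of
closed curves: if `R_O(K_m) ≥ r` for all sufficiently large `m`, then `R_O(K₀) ≥ r`;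
consequently `limsup_m R_O(K_m) ≤ R_O(K₀)`. -/
theorem statement_14 {n : ℕ} (hn : 2 ≤ n) (L : ℝ) (hL : 0 < L)
    (γ : ℕ → ClosedC1 n L) (γ₀ : ClosedC1 n L)
    (hconv : TendstoUniformly (fun m => (γ m).f) γ₀.f atTop)
    (hconvd : TendstoUniformly (fun m => (γ m).fd) γ₀.fd atTop) :
    (∀ r : ℝ, 0 < r → (∀ᶠ m in atTop, r ≤ RO (γ m).f (γ m).fd Set.univ) →
      r ≤ RO γ₀.f γ₀.fd Set.univ) ∧
    atTop.limsup (fun m => RO (γ m).f (γ m).fd Set.univ) ≤ RO γ₀.f γ₀.fd Set.univ :=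
  statement_14_general L hL γ γ₀ hconv hconvd
end

section
/- Let γ : ℝ/Lℤ → ℝⁿ (n ≥ 2) be a knot (simple closed unit-speed C^{1,1} curve) with image K, and let γ_m : ℝ/Lℤ → ℝⁿ be a sequence of C^{1,1} simple closed curves with nowhere-vanishing derivative such that γ_m → γ and γ_m' → γ' uniformly, satisfying: (a) there is C < ∞ such that for every m the unit tangent field T_m = γ_m'/‖γ_m'‖ of γ_m is C-Lipschitz with respect to the arclength of γ_m; and (b) there is a compact set A ⊂ ℝ/Lℤ with {s : γ_m(s) ≠ γ(s)} ⊆ A for all m. If A ∩ I_c = ∅, then there exists m₁ such that MDC(K_m) ≥ MDC(K) for all m ≥ m₁, where K_m is the image of γ_m. -/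
open Set Filter MeasureTheory
open scoped RealInnerProductSpace Topology ENNReal

lemma periodic_eval {α : Type*} {f : ℝ → α} {L : ℝ} (hL : 0 < L)
    (hf : Function.Periodic f L) (x : ℝ) : f (toIcoMod hL 0 x) = f x := by
  rw [← self_sub_toIcoDiv_zsmul hL 0 x]
  exact hf.sub_zsmul_eq _

-- diameter pair existence, abstract version
lemma exists_dcp {n : ℕ} {L : ℝ} (hL : 0 < L) (f fd : ℝ → Euc n)
    (hper : Function.Periodic f L)
    (hderiv : ∀ s, HasDerivAt f (fd s) s)
    (hinj : InjOn f (Ico 0 L)) :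
    ∃ x y : ℝ, f x ≠ f y ∧ ⟪f x - f y, fd x⟫ = 0 ∧ ⟪f x - f y, fd y⟫ = 0 := by
  have hcf : Continuous f := by
    rw [continuous_iff_continuousAt]
    exact fun s => (hderiv s).differentiableAt.continuousAt
  set F : ℝ × ℝ → ℝ := fun p => ‖f p.1 - f p.2‖ ^ 2 with hF
  have hcF : Continuous F := by fun_prop
  have hK : IsCompact (Icc (0:ℝ) L ×ˢ Icc (0:ℝ) L) := isCompact_Icc.prod isCompact_Icc
  obtain ⟨q, hqK, hmax⟩ := hK.exists_isMaxOn (by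
      exact ⟨(0, 0), by constructor <;> exact ⟨le_refl _, hL.le⟩⟩)
    hcF.continuousOn
  -- global maximum
  have hglob : ∀ p : ℝ × ℝ, F p ≤ F q := by
    intro p
    have h1 : F p = F (toIcoMod hL 0 p.1, toIcoMod hL 0 p.2) := by
      simp only [hF, periodic_eval hL hper]
    rw [h1]
    refine hmax ⟨?_, ?_⟩
    · exact Ico_subset_Icc_self (by simpa using toIcoMod_mem_Ico hL 0 p.1)
    · exact Ico_subset_Icc_self (by simpa using toIcoMod_mem_Ico hL 0 p.2)
  -- positivity
  have hne : f q.1 ≠ f q.2 := by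
    have h0 : f 0 ≠ f (L / 2) := by
      intro he
      have := hinj ⟨le_refl _, hL⟩ ⟨by linarith, by linarith⟩ he
      linarith
    have hpos : 0 < F (0, L / 2) := by
      have hne0 : f 0 - f (L / 2) ≠ 0 := sub_ne_zero.2 h0
      show (0:ℝ) < ‖f 0 - f (L/2)‖ ^ 2
      exact pow_pos (norm_pos_iff.mpr hne0) 2
    intro he
    have : F q = 0 := by simp [hF, he]
    have := hglob (0, L / 2)
    linarith
  refine ⟨q.1, q.2, hne, ?_, ?_⟩
  · have hg : HasDerivAt (fun t => ⟪f t - f q.2, f t - f q.2⟫)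
        (⟪f q.1 - f q.2, fd q.1⟫ + ⟪fd q.1, f q.1 - f q.2⟫) q.1 :=
      HasDerivAt.inner ℝ ((hderiv q.1).sub_const _) ((hderiv q.1).sub_const _)
    have hloc : IsLocalMax (fun t => ⟪f t - f q.2, f t - f q.2⟫) q.1 := by
      apply Filter.Eventually.of_forall
      intro t
      show ⟪f t - f q.2, f t - f q.2⟫ ≤ ⟪f q.1 - f q.2, f q.1 - f q.2⟫
      rw [real_inner_self_eq_norm_sq, real_inner_self_eq_norm_sq]
      exact hglob (t, q.2)
    have h0 := hloc.hasDerivAt_eq_zero hg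
    rw [real_inner_comm (fd q.1)] at h0
    rw [real_inner_comm]
    linarith
  · have hg : HasDerivAt (fun t => ⟪f q.1 - f t, f q.1 - f t⟫)
        (⟪f q.1 - f q.2, -fd q.2⟫ + ⟪-fd q.2, f q.1 - f q.2⟫) q.2 :=
      HasDerivAt.inner ℝ ((hderiv q.2).const_sub _) ((hderiv q.2).const_sub _)
    have hloc : IsLocalMax (fun t => ⟪f q.1 - f t, f q.1 - f t⟫) q.2 := by
      apply Filter.Eventually.of_forall
      intro t
      show ⟪f q.1 - f t, f q.1 - f t⟫ ≤ ⟪f q.1 - f q.2, f q.1 - f q.2⟫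
      rw [real_inner_self_eq_norm_sq, real_inner_self_eq_norm_sq]
      exact hglob (q.1, t)
    have h0 := hloc.hasDerivAt_eq_zero hg
    rw [inner_neg_right, inner_neg_left, real_inner_comm (fd q.2)] at h0
    rw [real_inner_comm]
    linarith


lemma chord_inner_pos {n : ℕ} (f fd : ℝ → Euc n) (hderiv : ∀ s, HasDerivAt f (fd s) s)
    (hcont : Continuous fd) (v : Euc n) {a b : ℝ} (hab : a < b)
    (hlb : ∀ t ∈ Icc a b, (3:ℝ)/8 ≤ ⟪v, fd t⟫) :
    0 < ⟪f b - f a, v⟫ := by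
  have hint : IntervalIntegrable fd volume a b := hcont.intervalIntegrable a b
  have hftc : ∫ t in a..b, fd t = f b - f a :=
    intervalIntegral.integral_eq_sub_of_hasDerivAt (fun t _ => hderiv t) hint
  have hcomm : ∫ t in a..b, ⟪v, fd t⟫ = ⟪v, f b - f a⟫ := by
    rw [← hftc]
    exact (innerSL ℝ v).intervalIntegral_comp_comm hint
  have hmono : (b - a) * (3/8) ≤ ∫ t in a..b, ⟪v, fd t⟫ := by
    have hconst : ∫ _t in a..b, (3:ℝ)/8 = (b - a) * (3/8) := by
      rw [intervalIntegral.integral_const, smul_eq_mul]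
    rw [← hconst]
    exact intervalIntegral.integral_mono_on hab.le intervalIntegrable_const
      ((continuous_const.inner hcont).intervalIntegrable a b) hlb
  have : 0 < ⟪v, f b - f a⟫ := by
    rw [← hcomm]
    have : 0 < (b - a) * (3/8) := by
      have := sub_pos.2 hab; positivity
    linarith
  rw [real_inner_comm]
  exact this

lemma small_chord {n : ℕ} (γ : Knot n) (γm : ℕ → ClosedC11 n γ.L)
    (hconvd : TendstoUniformly (fun m => (γm m).fd) γ.fd atTop) :
    ∃ δ > 0, ∃ N : ℕ, ∀ m ≥ N, ∀ x y : ℝ, x ≠ y → |x - y| ≤ δ →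
      ⟪(γm m).f x - (γm m).f y, (γm m).fd x⟫ ≠ 0 := by
  obtain ⟨C₀, hlip⟩ := γ.lipd
  set δ : ℝ := 1 / (4 * ((C₀ : ℝ) + 1)) with hδ
  have hC0 : (0:ℝ) ≤ (C₀ : ℝ) := C₀.coe_nonneg
  have hδpos : 0 < δ := by rw [hδ]; positivity
  have hC0δ : (C₀ : ℝ) * δ ≤ 1/4 := by
    rw [hδ, mul_one_div, div_le_div_iff₀ (by positivity) (by norm_num)]
    nlinarith
  have claim1 : ∀ t x : ℝ, |t - x| ≤ δ → (3:ℝ)/4 ≤ ⟪γ.fd x, γ.fd t⟫ := by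
    intro t x htx
    have h1 : ⟪γ.fd x, γ.fd x⟫ = 1 := by
      rw [real_inner_self_eq_norm_sq, γ.unit]; norm_num
    have h2 : |⟪γ.fd x, γ.fd t - γ.fd x⟫| ≤ ‖γ.fd x‖ * ‖γ.fd t - γ.fd x‖ :=
      abs_real_inner_le_norm _ _
    have h3 : ‖γ.fd t - γ.fd x‖ ≤ (C₀ : ℝ) * |t - x| := by
      have := hlip.dist_le_mul t x
      rwa [dist_eq_norm, Real.dist_eq] at this
    have h4 : ‖γ.fd t - γ.fd x‖ ≤ 1/4 := by
      calc ‖γ.fd t - γ.fd x‖ ≤ (C₀ : ℝ) * |t - x| := h3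
        _ ≤ (C₀ : ℝ) * δ := by nlinarith [abs_nonneg (t - x)]
        _ ≤ 1/4 := hC0δ
    have h5 : ⟪γ.fd x, γ.fd t⟫ = ⟪γ.fd x, γ.fd x⟫ + ⟪γ.fd x, γ.fd t - γ.fd x⟫ := by
      rw [inner_sub_right]; ring
    rw [h5, h1, γ.unit, one_mul] at *
    have := abs_le.1 h2
    linarith
  obtain ⟨N, hN⟩ : ∃ N : ℕ, ∀ m ≥ N, ∀ s : ℝ, dist (γ.fd s) ((γm m).fd s) < 1/8 := by
    have := Metric.tendstoUniformly_iff.1 hconvd (1/8) (by norm_num)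
    rw [eventually_atTop] at this
    exact this
  refine ⟨δ, hδpos, N, ?_⟩
  have claim2 : ∀ m ≥ N, ∀ t x : ℝ, |t - x| ≤ δ →
      (3:ℝ)/8 ≤ ⟪(γm m).fd x, (γm m).fd t⟫ := by
    intro m hm t x htx
    set gx := (γm m).fd x
    set gt := (γm m).fd t
    have hdx : ‖gx - γ.fd x‖ ≤ 1/8 := by
      have := (hN m hm x).le
      rwa [dist_eq_norm, norm_sub_rev] at this
    have hdt : ‖gt - γ.fd t‖ ≤ 1/8 := by
      have := (hN m hm t).le
      rwa [dist_eq_norm, norm_sub_rev] at this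
    have hgt : ‖gt‖ ≤ 9/8 := by
      have := norm_sub_norm_le gt (γ.fd t)
      rw [γ.unit] at this
      linarith
    have hex : ⟪gx, gt⟫ = ⟪γ.fd x, γ.fd t⟫ + ⟪gx - γ.fd x, gt⟫
        + ⟪γ.fd x, gt - γ.fd t⟫ := by
      rw [inner_sub_left, inner_sub_right]; ring
    have hb1 : |⟪gx - γ.fd x, gt⟫| ≤ ‖gx - γ.fd x‖ * ‖gt‖ := abs_real_inner_le_norm _ _
    have hb2 : |⟪γ.fd x, gt - γ.fd t⟫| ≤ ‖γ.fd x‖ * ‖gt - γ.fd t‖ := abs_real_inner_le_norm _ _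
    rw [γ.unit, one_mul] at hb2
    have hb1' : |⟪gx - γ.fd x, gt⟫| ≤ (1/8) * (9/8) := by
      calc |⟪gx - γ.fd x, gt⟫| ≤ ‖gx - γ.fd x‖ * ‖gt‖ := hb1
        _ ≤ (1/8) * (9/8) := by
          apply mul_le_mul hdx hgt (norm_nonneg _) (by norm_num)
    have hc1 := claim1 t x htx
    have := abs_le.1 hb1'
    have := abs_le.1 (hb2.trans hdt)
    rw [hex]
    linarith
  intro m hm x y hxy hxyd
  obtain ⟨Cm, hlipm⟩ := (γm m).lipd
  have hcontm : Continuous (γm m).fd := hlipm.continuous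
  rcases lt_or_gt_of_ne hxy with h | h
  · -- x < y
    have hpos : 0 < ⟪(γm m).f y - (γm m).f x, (γm m).fd x⟫ := by
      apply chord_inner_pos (γm m).f (γm m).fd (γm m).deriv hcontm _ h
      intro t ht
      apply claim2 m hm t x
      rw [abs_sub_le_iff] at hxyd ⊢
      constructor <;> [skip; skip] <;> cases' ht with h1 h2 <;> linarith [hxyd.1, hxyd.2]
    have heq : ⟪(γm m).f x - (γm m).f y, (γm m).fd x⟫
        = -⟪(γm m).f y - (γm m).f x, (γm m).fd x⟫ := by
      rw [← inner_neg_left]; congr 1; abel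
    rw [heq]
    exact ne_of_lt (by linarith)
  · -- y < x
    have hpos : 0 < ⟪(γm m).f x - (γm m).f y, (γm m).fd x⟫ := by
      apply chord_inner_pos (γm m).f (γm m).fd (γm m).deriv hcontm _ h
      intro t ht
      apply claim2 m hm t x
      rw [abs_sub_le_iff] at hxyd ⊢
      constructor <;> cases' ht with h1 h2 <;> linarith [hxyd.1, hxyd.2]
    exact ne_of_gt hpos

lemma Ic_shift {n : ℕ} (γ : Knot n) {x : ℝ} (hx : x ∈ γ.Ic) :
    x + γ.L ∈ γ.Ic ∧ x - γ.L ∈ γ.Ic := by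
  obtain ⟨y, h1, h2, h3, h4⟩ := hx
  have hf : ∀ s, γ.f (s + γ.L) = γ.f s := γ.per
  have hfd : ∀ s, γ.fd (s + γ.L) = γ.fd s := γ.perd
  have hf' : ∀ s, γ.f (s - γ.L) = γ.f s := fun s => by
    rw [← hf (s - γ.L), sub_add_cancel]
  have hfd' : ∀ s, γ.fd (s - γ.L) = γ.fd s := fun s => by
    rw [← hfd (s - γ.L), sub_add_cancel]
  constructor
  · exact ⟨y, by rwa [hf], by rwa [hf, hfd], by rwa [hf], by rwa [hf]⟩
  · exact ⟨y, by rwa [hf'], by rwa [hf', hfd'], by rwa [hf'], by rwa [hf']⟩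

lemma agree_near {n : ℕ} (γ : Knot n) (γm : ℕ → ClosedC11 n γ.L)
    (A : Set ℝ) (hA : IsCompact A)
    (hAsub : ∀ m, {s : ℝ | s ∈ Set.Icc (0 : ℝ) γ.L ∧ (γm m).f s ≠ γ.f s} ⊆ A)
    (hAI : A ∩ γ.Ic = ∅) {x : ℝ} (hx : x ∈ Icc (0:ℝ) γ.L) (hxI : x ∈ γ.Ic) :
    ∃ ε > 0, ∀ m, ∀ s : ℝ, |s - x| < ε → (γm m).f s = γ.f s := by
  have hL : 0 < γ.L := γ.Lpos
  have hdisj : ∀ t, t ∈ A → t ∉ γ.Ic := fun t ht hI =>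
    Set.eq_empty_iff_forall_notMem.mp hAI t ⟨ht, hI⟩
  set B : Set ℝ := A ∩ Icc 0 γ.L with hB
  have hBc : IsClosed B := hA.isClosed.inter isClosed_Icc
  set A' : Set ℝ := B ∪ (fun t => t - γ.L) ⁻¹' B ∪ (fun t => t + γ.L) ⁻¹' B with hA'
  have hclosed : IsClosed A' :=
    ((hBc.union (hBc.preimage (continuous_id.sub continuous_const))).union
      (hBc.preimage (continuous_id.add continuous_const)))
  have hxA' : x ∉ A' := by
    intro hmem
    rcases hmem with hmem | hmem
    · rcases hmem with hmem | hmem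
      · exact hdisj x hmem.1 hxI
      · exact hdisj (x - γ.L) hmem.1 (Ic_shift γ hxI).2
    · exact hdisj (x + γ.L) hmem.1 (Ic_shift γ hxI).1
  obtain ⟨ε0, hε0, hball⟩ := Metric.isOpen_iff.1 hclosed.isOpen_compl x hxA'
  refine ⟨min ε0 γ.L, lt_min hε0 hL, ?_⟩
  intro m s hs
  have hs1 : |s - x| < ε0 := lt_of_lt_of_le hs (min_le_left _ _)
  have hs2 : |s - x| < γ.L := lt_of_lt_of_le hs (min_le_right _ _)
  obtain ⟨hs2a, hs2b⟩ := abs_lt.1 hs2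
  have hsA' : s ∉ A' := hball (by rwa [Metric.mem_ball, Real.dist_eq])
  have hnB : ∀ t, t ∉ B → t ∈ Icc (0:ℝ) γ.L → (γm m).f t = γ.f t := by
    intro t htB ht
    by_contra hne
    exact htB ⟨hAsub m ⟨ht, hne⟩, ht⟩
  rcases le_or_gt 0 s with h0s | h0s
  · rcases le_or_gt s γ.L with hsL | hsL
    · exact hnB s (fun h => hsA' (Or.inl (Or.inl h))) ⟨h0s, hsL⟩
    · -- s > L
      have hmem : s - γ.L ∈ Icc (0:ℝ) γ.L := ⟨by linarith, by
        have := hx.2; linarith⟩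
      have h1 : (γm m).f (s - γ.L) = γ.f (s - γ.L) :=
        hnB (s - γ.L) (fun h => hsA' (Or.inl (Or.inr h))) hmem
      have e1 : (γm m).f s = (γm m).f (s - γ.L) := by
        have := (γm m).per (s - γ.L); rw [sub_add_cancel] at this; exact this
      have e2 : γ.f s = γ.f (s - γ.L) := by
        have := γ.per (s - γ.L); rw [sub_add_cancel] at this; exact this
      rw [e1, e2, h1]
  · -- s < 0
    have hmem : s + γ.L ∈ Icc (0:ℝ) γ.L := ⟨by have := hx.1; linarith, by linarith⟩
    have h1 : (γm m).f (s + γ.L) = γ.f (s + γ.L) :=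
      hnB (s + γ.L) (fun h => hsA' (Or.inr h)) hmem
    rw [← (γm m).per s, ← γ.per s, h1]

/-- Let `γ_m → γ` in `C¹`, with unit tangents uniformly `C`-Lipschitz
w.r.t. arclength, and with all modifications supported in a compact set `A` disjoint from
`I_c`. Then `MDC(K_m) ≥ MDC(K)` for all sufficiently large `m`. -/
theorem statement_17 {n : ℕ} (hn : 2 ≤ n) (γ : Knot n)
    (γm : ℕ → ClosedC11 n γ.L)
    (hconv : TendstoUniformly (fun m => (γm m).f) γ.f atTop)
    (hconvd : TendstoUniformly (fun m => (γm m).fd) γ.fd atTop)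
    (C : ℝ) (hC : ∀ m, TangentLip (γm m).toClosedC1 C)
    (A : Set ℝ) (hA : IsCompact A)
    (hAsub : ∀ m, {s : ℝ | s ∈ Set.Icc (0 : ℝ) γ.L ∧ (γm m).f s ≠ γ.f s} ⊆ A)
    (hAI : A ∩ γ.Ic = ∅) :
    ∃ m₁ : ℕ, ∀ m ≥ m₁, MDC γ.f γ.fd ≤ MDC (γm m).f (γm m).fd := by
  by_contra hcon
  push_neg at hcon
  have hL : 0 < γ.L := γ.Lpos
  set M := MDC γ.f γ.fd with hM
  obtain ⟨C₀, hlipγ⟩ := γ.lipd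
  have hcfd : Continuous γ.fd := hlipγ.continuous
  have hcf : Continuous γ.f := by
    rw [continuous_iff_continuousAt]
    exact fun s => (γ.deriv s).differentiableAt.continuousAt
  have hMle : ∀ x y : ℝ, γ.f x ≠ γ.f y → ⟪γ.f x - γ.f y, γ.fd x⟫ = 0 →
      ⟪γ.f x - γ.f y, γ.fd y⟫ = 0 → M ≤ ‖γ.f x - γ.f y‖ := by
    intro x y h1 h2 h3
    apply csInf_le
    · refine ⟨0, ?_⟩
      rintro d ⟨x', y', _, _, _, hd⟩
      rw [hd]; exact norm_nonneg _
    · exact ⟨x, y, h1, h2, h3, rfl⟩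
  obtain ⟨φ, hφmono, hφ⟩ := extraction_of_frequently_atTop
    (frequently_atTop.2 hcon)
  have hpair : ∀ k, ∃ x ∈ Ico (0:ℝ) γ.L, ∃ y ∈ Ico (0:ℝ) γ.L,
      (γm (φ k)).f x ≠ (γm (φ k)).f y ∧
      ⟪(γm (φ k)).f x - (γm (φ k)).f y, (γm (φ k)).fd x⟫ = 0 ∧
      ⟪(γm (φ k)).f x - (γm (φ k)).f y, (γm (φ k)).fd y⟫ = 0 ∧
      ‖(γm (φ k)).f x - (γm (φ k)).f y‖ < M := by
    intro k
    obtain ⟨x0, y0, hne0, hi10, hi20⟩ :=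
      exists_dcp hL (γm (φ k)).f (γm (φ k)).fd (γm (φ k)).per (γm (φ k)).deriv (γm (φ k)).inj
    have hnonempty : Set.Nonempty {d : ℝ | ∃ x y : ℝ, (γm (φ k)).f x ≠ (γm (φ k)).f y ∧
        ⟪(γm (φ k)).f x - (γm (φ k)).f y, (γm (φ k)).fd x⟫ = 0 ∧
        ⟪(γm (φ k)).f x - (γm (φ k)).f y, (γm (φ k)).fd y⟫ = 0 ∧
        d = ‖(γm (φ k)).f x - (γm (φ k)).f y‖} :=
      ⟨‖(γm (φ k)).f x0 - (γm (φ k)).f y0‖, x0, y0, hne0, hi10, hi20, rfl⟩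
    obtain ⟨d, hdmem, hdM⟩ := exists_lt_of_csInf_lt hnonempty (hφ k)
    obtain ⟨x, y, hne, h1, h2, hdval⟩ := hdmem
    have e1 : (γm (φ k)).f (toIcoMod hL 0 x) = (γm (φ k)).f x :=
      periodic_eval hL (γm (φ k)).per x
    have e2 : (γm (φ k)).f (toIcoMod hL 0 y) = (γm (φ k)).f y :=
      periodic_eval hL (γm (φ k)).per y
    have e3 : (γm (φ k)).fd (toIcoMod hL 0 x) = (γm (φ k)).fd x :=
      periodic_eval hL (γm (φ k)).perd x
    have e4 : (γm (φ k)).fd (toIcoMod hL 0 y) = (γm (φ k)).fd y :=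
      periodic_eval hL (γm (φ k)).perd y
    refine ⟨toIcoMod hL 0 x, by simpa using toIcoMod_mem_Ico hL 0 x,
      toIcoMod hL 0 y, by simpa using toIcoMod_mem_Ico hL 0 y, ?_, ?_, ?_, ?_⟩
    · rw [e1, e2]; exact hne
    · rw [e1, e2, e3]; exact h1
    · rw [e1, e2, e4]; exact h2
    · rw [e1, e2, ← hdval]; exact hdM
  choose xs hxs ys hys hne hI1 hI2 hlt using hpair
  have hmem : ∀ k, (xs k, ys k) ∈ Icc (0:ℝ) γ.L ×ˢ Icc (0:ℝ) γ.L :=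
    fun k => ⟨Ico_subset_Icc_self (hxs k), Ico_subset_Icc_self (hys k)⟩
  obtain ⟨q, hqmem, ψ, hψmono, hψtend⟩ :=
    (isCompact_Icc.prod isCompact_Icc).tendsto_subseq hmem
  have hxa : Tendsto (fun j => xs (ψ j)) atTop (𝓝 q.1) :=
    (continuous_fst.tendsto q).comp hψtend
  have hyb : Tendsto (fun j => ys (ψ j)) atTop (𝓝 q.2) :=
    (continuous_snd.tendsto q).comp hψtend
  have hMjmono : StrictMono (fun j => φ (ψ j)) := hφmono.comp hψmono
  have hMj : Tendsto (fun j => φ (ψ j)) atTop atTop := hMjmono.tendsto_atTop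
  have hconv' : TendstoUniformly (fun j => (γm (φ (ψ j))).f) γ.f atTop :=
    Metric.tendstoUniformly_iff.2 fun ε hε =>
      hMj.eventually (Metric.tendstoUniformly_iff.1 hconv ε hε)
  have hconvd' : TendstoUniformly (fun j => (γm (φ (ψ j))).fd) γ.fd atTop :=
    Metric.tendstoUniformly_iff.2 fun ε hε =>
      hMj.eventually (Metric.tendstoUniformly_iff.1 hconvd ε hε)
  have hfx : Tendsto (fun j => (γm (φ (ψ j))).f (xs (ψ j))) atTop (𝓝 (γ.f q.1)) :=
    hconv'.tendsto_comp hcf.continuousAt hxa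
  have hfy : Tendsto (fun j => (γm (φ (ψ j))).f (ys (ψ j))) atTop (𝓝 (γ.f q.2)) :=
    hconv'.tendsto_comp hcf.continuousAt hyb
  have hfdx : Tendsto (fun j => (γm (φ (ψ j))).fd (xs (ψ j))) atTop (𝓝 (γ.fd q.1)) :=
    hconvd'.tendsto_comp hcfd.continuousAt hxa
  have hfdy : Tendsto (fun j => (γm (φ (ψ j))).fd (ys (ψ j))) atTop (𝓝 (γ.fd q.2)) :=
    hconvd'.tendsto_comp hcfd.continuousAt hyb
  by_cases hab : γ.f q.1 = γ.f q.2
  · -- the limit points coincide on the curve: contradiction via small_chord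
    obtain ⟨δ, hδ, N, hsc⟩ := small_chord γ γm hconvd
    have hfL : γ.f γ.L = γ.f 0 := by have := γ.per 0; rwa [zero_add] at this
    have hcases : q.2 = q.1 + 0 ∨ q.2 = q.1 + (-γ.L) ∨ q.2 = q.1 + γ.L := by
      have ha := hqmem.1; have hb := hqmem.2
      rcases eq_or_lt_of_le ha.2 with haL | haL
      · rcases eq_or_lt_of_le hb.2 with hbL | hbL
        · left; linarith
        · -- q.1 = L, q.2 < L : γ.f 0 = γ.f q.2 → q.2 = 0
          have : γ.f 0 = γ.f q.2 := by rw [← hfL, ← haL]; exact hab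
          have h02 : (0:ℝ) = q.2 := γ.inj ⟨le_refl _, hL⟩ ⟨hb.1, hbL⟩ this
          right; left; linarith
      · rcases eq_or_lt_of_le hb.2 with hbL | hbL
        · -- q.2 = L : γ.f q.1 = γ.f 0 → q.1 = 0
          have : γ.f q.1 = γ.f 0 := by rw [← hfL, ← hbL]; exact hab
          have h10 : q.1 = 0 := γ.inj ⟨ha.1, haL⟩ ⟨le_refl _, hL⟩ this
          right; right; linarith
        · left; rw [add_zero]
          exact (γ.inj ⟨ha.1, haL⟩ ⟨hb.1, hbL⟩ hab).symm
    obtain ⟨e, hbe, hfe⟩ : ∃ e : ℝ, q.2 = q.1 + e ∧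
        ∀ m t, (γm m).f (t - e) = (γm m).f t := by
      rcases hcases with h | h | h
      · exact ⟨0, h, fun m t => by rw [sub_zero]⟩
      · exact ⟨-γ.L, h, fun m t => by rw [sub_neg_eq_add]; exact (γm m).per t⟩
      · refine ⟨γ.L, h, fun m t => ?_⟩
        have := (γm m).per (t - γ.L); rw [sub_add_cancel] at this; exact this.symm
    have hys' : Tendsto (fun j => ys (ψ j) - e) atTop (𝓝 q.1) := by
      have h := hyb.sub_const e
      rwa [show q.2 - e = q.1 by rw [hbe]; ring] at h
    have hdiff : Tendsto (fun j => xs (ψ j) - (ys (ψ j) - e)) atTop (𝓝 0) := by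
      have := hxa.sub hys'
      rwa [sub_self] at this
    have hev1 : ∀ᶠ j in atTop, |xs (ψ j) - (ys (ψ j) - e)| ≤ δ := by
      filter_upwards [Metric.tendsto_nhds.1 hdiff δ hδ] with j hj
      rw [Real.dist_eq, sub_zero] at hj
      exact hj.le
    have hev2 : ∀ᶠ j in atTop, N ≤ φ (ψ j) := hMj.eventually (eventually_ge_atTop N)
    obtain ⟨j, hj1, hj2⟩ := (hev1.and hev2).exists
    have hxyne : xs (ψ j) ≠ ys (ψ j) - e := by
      intro h
      apply hne (ψ j)
      rw [h]
      exact hfe (φ (ψ j)) (ys (ψ j))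
    have hzero : ⟪(γm (φ (ψ j))).f (xs (ψ j)) - (γm (φ (ψ j))).f (ys (ψ j) - e),
        (γm (φ (ψ j))).fd (xs (ψ j))⟫ = 0 := by
      rw [hfe (φ (ψ j)) (ys (ψ j))]
      exact hI1 (ψ j)
    exact hsc (φ (ψ j)) hj2 _ _ hxyne hj1 hzero
  · -- the limit pair is a minimal double critical pair of γ
    have l1 : Tendsto (fun j => ⟪(γm (φ (ψ j))).f (xs (ψ j)) - (γm (φ (ψ j))).f (ys (ψ j)),
        (γm (φ (ψ j))).fd (xs (ψ j))⟫) atTop (𝓝 ⟪γ.f q.1 - γ.f q.2, γ.fd q.1⟫) :=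
      Tendsto.inner (hfx.sub hfy) hfdx
    have l2 : Tendsto (fun j => ⟪(γm (φ (ψ j))).f (xs (ψ j)) - (γm (φ (ψ j))).f (ys (ψ j)),
        (γm (φ (ψ j))).fd (ys (ψ j))⟫) atTop (𝓝 ⟪γ.f q.1 - γ.f q.2, γ.fd q.2⟫) :=
      Tendsto.inner (hfx.sub hfy) hfdy
    have hinner1 : ⟪γ.f q.1 - γ.f q.2, γ.fd q.1⟫ = 0 := by
      refine tendsto_nhds_unique l1 ?_
      have heq : (fun j => ⟪(γm (φ (ψ j))).f (xs (ψ j)) - (γm (φ (ψ j))).f (ys (ψ j)),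
          (γm (φ (ψ j))).fd (xs (ψ j))⟫) = fun _ => (0:ℝ) := funext fun j => hI1 (ψ j)
      rw [heq]
      exact tendsto_const_nhds
    have hinner2 : ⟪γ.f q.1 - γ.f q.2, γ.fd q.2⟫ = 0 := by
      refine tendsto_nhds_unique l2 ?_
      have heq : (fun j => ⟪(γm (φ (ψ j))).f (xs (ψ j)) - (γm (φ (ψ j))).f (ys (ψ j)),
          (γm (φ (ψ j))).fd (ys (ψ j))⟫) = fun _ => (0:ℝ) := funext fun j => hI2 (ψ j)
      rw [heq]
      exact tendsto_const_nhds
    have hnorm : Tendsto (fun j => ‖(γm (φ (ψ j))).f (xs (ψ j)) -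
        (γm (φ (ψ j))).f (ys (ψ j))‖) atTop (𝓝 ‖γ.f q.1 - γ.f q.2‖) := (hfx.sub hfy).norm
    have hDle : ‖γ.f q.1 - γ.f q.2‖ ≤ M :=
      le_of_tendsto hnorm (Eventually.of_forall fun j => (hlt (ψ j)).le)
    have hDeq : ‖γ.f q.1 - γ.f q.2‖ = M :=
      le_antisymm hDle (hMle q.1 q.2 hab hinner1 hinner2)
    have haI : q.1 ∈ γ.Ic := ⟨q.2, hab, hinner1, hinner2, hDeq⟩
    have hbI : q.2 ∈ γ.Ic := by
      refine ⟨q.1, fun h => hab h.symm, ?_, ?_, ?_⟩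
      · rw [show γ.f q.2 - γ.f q.1 = -(γ.f q.1 - γ.f q.2) by abel, inner_neg_left,
          hinner2, neg_zero]
      · rw [show γ.f q.2 - γ.f q.1 = -(γ.f q.1 - γ.f q.2) by abel, inner_neg_left,
          hinner1, neg_zero]
      · rw [norm_sub_rev]; exact hDeq
    obtain ⟨εa, hεa, hagra⟩ := agree_near γ γm A hA hAsub hAI hqmem.1 haI
    obtain ⟨εb, hεb, hagrb⟩ := agree_near γ γm A hA hAsub hAI hqmem.2 hbI
    have hevx : ∀ᶠ j in atTop, |xs (ψ j) - q.1| < εa/2 := by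
      filter_upwards [Metric.tendsto_nhds.1 hxa (εa/2) (half_pos hεa)] with j hj
      rwa [Real.dist_eq] at hj
    have hevy : ∀ᶠ j in atTop, |ys (ψ j) - q.2| < εb/2 := by
      filter_upwards [Metric.tendsto_nhds.1 hyb (εb/2) (half_pos hεb)] with j hj
      rwa [Real.dist_eq] at hj
    obtain ⟨j, hja, hjb⟩ := (hevx.and hevy).exists
    have hfX : (γm (φ (ψ j))).f (xs (ψ j)) = γ.f (xs (ψ j)) :=
      hagra _ _ (by linarith [abs_nonneg (xs (ψ j) - q.1)])
    have hfY : (γm (φ (ψ j))).f (ys (ψ j)) = γ.f (ys (ψ j)) :=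
      hagrb _ _ (by linarith [abs_nonneg (ys (ψ j) - q.2)])
    have hfdX : (γm (φ (ψ j))).fd (xs (ψ j)) = γ.fd (xs (ψ j)) := by
      have hev' : ∀ᶠ s in 𝓝 (xs (ψ j)), γ.f s = (γm (φ (ψ j))).f s := by
        rw [Metric.eventually_nhds_iff]
        refine ⟨εa/2, half_pos hεa, fun s hs => ?_⟩
        rw [Real.dist_eq] at hs
        refine (hagra _ s ?_).symm
        have : |s - q.1| ≤ |s - xs (ψ j)| + |xs (ψ j) - q.1| := abs_sub_le _ _ _
        linarith
      exact HasDerivAt.unique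
        (((γm (φ (ψ j))).deriv (xs (ψ j))).congr_of_eventuallyEq hev') (γ.deriv (xs (ψ j)))
    have hfdY : (γm (φ (ψ j))).fd (ys (ψ j)) = γ.fd (ys (ψ j)) := by
      have hev' : ∀ᶠ s in 𝓝 (ys (ψ j)), γ.f s = (γm (φ (ψ j))).f s := by
        rw [Metric.eventually_nhds_iff]
        refine ⟨εb/2, half_pos hεb, fun s hs => ?_⟩
        rw [Real.dist_eq] at hs
        refine (hagrb _ s ?_).symm
        have : |s - q.2| ≤ |s - ys (ψ j)| + |ys (ψ j) - q.2| := abs_sub_le _ _ _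
        linarith
      exact HasDerivAt.unique
        (((γm (φ (ψ j))).deriv (ys (ψ j))).congr_of_eventuallyEq hev') (γ.deriv (ys (ψ j)))
    have h1 := hne (ψ j); rw [hfX, hfY] at h1
    have h2 := hI1 (ψ j); rw [hfX, hfY, hfdX] at h2
    have h3 := hI2 (ψ j); rw [hfX, hfY, hfdY] at h3
    have h4 := hlt (ψ j); rw [hfX, hfY] at h4
    exact absurd (hMle _ _ h1 h2 h3) (not_le.2 h4)
end
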